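/- arXiv:2508.12934 — 7 statements merged into one kernel-verified Lean document; each statement's English description precedes it below -/
import Mathlib

section
/- Let f : ℝ_+ → ℝ_+ be strictly increasing and nonnegative, and let the contest success function on N be the symmetric logit CSF p_i^M(x^M) = f(x_i) / Σ_{j∈M} f(x_j) for every M ⊆ N with |M| ≥ 2, i ∈ M, and x^M ∈ ℝ_+^M \ {0}. Then this CSF satisfies collusion-proofness (CP) if and only if f is subadditive, i.e., f(s + t) ≤ f(s) + f(t) for all s, t ≥ 0. -/
open Finset

/-- A joint effort vector: componentwise nonnegative, and active on `M`. -/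
def FeasibleOn {N : Type*} (M : Finset N) (x : N → ℝ) : Prop :=
  (∀ i, 0 ≤ x i) ∧ ∃ i ∈ M, x i ≠ 0

/-- A feasible effort vector for the full contest: `x ∈ ℝ₊^N \ {0}`. -/
def Feasible {N : Type*} (x : N → ℝ) : Prop :=
  (∀ i, 0 ≤ x i) ∧ ∃ i, x i ≠ 0

/-- A contest success function (CSF) on contestant set `N`: for every `M ⊆ N` with
`|M| ≥ 2`, a family of functions `p M · i` for `i ∈ M`, valued in `[0,1]`, depending
only on the coordinates in `M`, and summing to one over `M`. -/
structure CSF (N : Type*) where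
  p : Finset N → (N → ℝ) → N → ℝ
  restrict : ∀ M : Finset N, 2 ≤ M.card → ∀ x y : N → ℝ, FeasibleOn M x →
    (∀ i ∈ M, x i = y i) → ∀ i ∈ M, p M x i = p M y i
  nonneg : ∀ M : Finset N, 2 ≤ M.card → ∀ x, FeasibleOn M x → ∀ i ∈ M, 0 ≤ p M x i
  le_one : ∀ M : Finset N, 2 ≤ M.card → ∀ x, FeasibleOn M x → ∀ i ∈ M, p M x i ≤ 1
  sum_eq_one : ∀ M : Finset N, 2 ≤ M.card → ∀ x, FeasibleOn M x → ∑ i ∈ M, p M x i = 1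

namespace CSF

variable {N : Type*} [Fintype N] [DecidableEq N]

/-- Winning probability in the full contest. -/
def P (c : CSF N) (x : N → ℝ) (i : N) : ℝ := c.p Finset.univ x i

/-- Strict monotonicity (SM). -/
def SM (c : CSF N) : Prop :=
  ∀ x, Feasible x → ∀ i : N, c.P x i < 1 → ∀ xi' : ℝ, x i < xi' →
    c.P x i < c.P (Function.update x i xi') i

/-- Luce's choice axiom (LCA). -/
def LCA (c : CSF N) : Prop :=
  ∀ x, Feasible x → ∀ M : Finset N, 2 ≤ M.card → (∃ i ∈ M, x i ≠ 0) →
    ∀ i ∈ M, c.P x i = c.p M x i * ∑ j ∈ M, c.P x j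

/-- Deviation `d_{ij}(x)`: the externality of `i`'s activity on `j`'s allocation. -/
noncomputable def dev (c : CSF N) (x : N → ℝ) (i j : N) : ℝ :=
  (c.P (Function.update x i 0) j - c.P x j) / c.P (Function.update x i 0) j

/-- Homogeneous relative externality (HRE). -/
def HRE (c : CSF N) : Prop :=
  ∀ x, Feasible x → ∀ i j : N, i ≠ j → 0 < x i → 0 < x j → ∀ l : ℝ, 0 < l →
    0 < c.P (Function.update x i 0) j → 0 < c.P (Function.update x j 0) i →
    0 < c.P (Function.update (fun k => l * x k) i 0) j →
    0 < c.P (Function.update (fun k => l * x k) j 0) i →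
    c.dev x j i ≠ 0 → c.dev (fun k => l * x k) j i ≠ 0 →
    c.dev x i j / c.dev x j i
      = c.dev (fun k => l * x k) i j / c.dev (fun k => l * x k) j i

/-- Relative homogeneity (RH). -/
def RH (c : CSF N) : Prop :=
  ∀ x, Feasible x → ∀ i j : N, 0 < x i → 0 < x j → ∀ l : ℝ, 0 < l →
    c.P x i / c.P x j = c.P (fun k => l * x k) i / c.P (fun k => l * x k) j

/-- Homogeneity (HOM). -/
def HOM (c : CSF N) : Prop :=
  ∀ x, Feasible x → ∀ i : N, ∀ l : ℝ, 0 < l → c.P (fun k => l * x k) i = c.P x i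

/-- Anonymity (ANY). -/
def ANY (c : CSF N) : Prop :=
  ∀ π : Equiv.Perm N, ∀ x, Feasible x → ∀ i : N,
    c.P (fun k => x (π.symm k)) (π i) = c.P x i

/-- No advantageous reallocation (NAR). -/
def NAR (c : CSF N) : Prop :=
  ∀ x, Feasible x → ∀ i j : N, i ≠ j → ∀ xi' xj' : ℝ, 0 ≤ xi' → 0 ≤ xj' →
    xi' + xj' = x i + x j → ∀ k : N, k ≠ i → k ≠ j →
    c.P (Function.update (Function.update x i xi') j xj') k = c.P x k

/-- Dummy consistency (DC). -/
def DC (c : CSF N) : Prop :=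
  ∀ x, Feasible x → ∀ i : N, x i = 0 → ∀ j : N, j ≠ i →
    c.P x j = c.p (Finset.univ.erase i) x j

/-- Clark–Riis independence (CRI). -/
def CRI (c : CSF N) : Prop :=
  ∀ x, Feasible x → ∀ i j : N, i ≠ j → c.P x j < 1 →
    c.P (Function.update x j 0) i = c.P x i / (1 - c.P x j)

/-- Split-proofness (SP). -/
def SP (c : CSF N) : Prop :=
  ∀ x, Feasible x → ∀ i j : N, i ≠ j →
    c.P x i + c.P x j ≤ c.p (Finset.univ.erase j) (Function.update x i (x i + x j)) i

/-- Collusion-proofness (CP). -/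
def CP (c : CSF N) : Prop :=
  ∀ x, Feasible x → ∀ i j : N, i ≠ j →
    c.p (Finset.univ.erase j) (Function.update x i (x i + x j)) i ≤ c.P x i + c.P x j

end CSF

/-- the symmetric logit CSF with impact function `f` satisfies
collusion-proofness iff `f` is subadditive on ℝ₊. -/
theorem statement10 {N : Type*} [Fintype N] [DecidableEq N]
    (hN : 3 ≤ Fintype.card N) (c : CSF N) (f : ℝ → ℝ)
    (hmono : StrictMonoOn f (Set.Ici 0)) (hnn : ∀ t : ℝ, 0 ≤ t → 0 ≤ f t)
    (hform : ∀ M : Finset N, 2 ≤ M.card → ∀ x, FeasibleOn M x → ∀ i ∈ M,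
      c.p M x i = f (x i) / ∑ j ∈ M, f (x j)) :
    c.CP ↔ ∀ s t : ℝ, 0 ≤ s → 0 ≤ t → f (s + t) ≤ f s + f t := by
  have hf0 : 0 ≤ f 0 := hnn 0 le_rfl
  have hUcard : 2 ≤ (Finset.univ : Finset N).card := by
    rw [Finset.card_univ]; omega
  constructor
  · intro hCP s t hs ht
    have h3 : 3 ≤ (Finset.univ : Finset N).card := by rw [Finset.card_univ]; exact hN
    obtain ⟨u, _, hcard⟩ := Finset.exists_subset_card_eq (s := Finset.univ) h3
    obtain ⟨i, j, k, hij, hik, hjk, rfl⟩ := Finset.card_eq_three.mp hcard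
    set x : N → ℝ := fun m => if m = i then s else if m = j then t else if m = k then 1 else 0
      with hxdef
    have hxi : x i = s := by simp [hxdef]
    have hxj : x j = t := by simp [hxdef, hij.symm]
    have hxk : x k = 1 := by simp [hxdef, hik.symm, hjk.symm]
    have hxnn : ∀ m, 0 ≤ x m := by
      intro m; simp only [hxdef]; split_ifs <;> first | exact hs | exact ht | norm_num
    have hxfeas : Feasible x := ⟨hxnn, k, by rw [hxk]; norm_num⟩
    have hiM : i ∈ Finset.univ.erase j := Finset.mem_erase.mpr ⟨hij, Finset.mem_univ i⟩
    have hkM : k ∈ (Finset.univ.erase j).erase i :=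
      Finset.mem_erase.mpr ⟨hik.symm, Finset.mem_erase.mpr ⟨hjk.symm, Finset.mem_univ k⟩⟩
    set y := Function.update x i (x i + x j) with hydef
    have hMcard : 2 ≤ (Finset.univ.erase j).card := by
      rw [Finset.card_erase_of_mem (Finset.mem_univ j), Finset.card_univ]; omega
    have hyk : y k = 1 := by rw [hydef, Function.update_of_ne hik.symm, hxk]
    have hynn : ∀ m, 0 ≤ y m := by
      intro m; rcases eq_or_ne m i with heq | hm
      · rw [hydef, heq, Function.update_self]; exact add_nonneg (hxnn i) (hxnn j)
      · rw [hydef, Function.update_of_ne hm]; exact hxnn m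
    have hyfeas : FeasibleOn (Finset.univ.erase j) y :=
      ⟨hynn, k, Finset.mem_erase.mpr ⟨hjk.symm, Finset.mem_univ k⟩, by rw [hyk]; norm_num⟩
    set R := ∑ m ∈ (Finset.univ.erase j).erase i, f (x m) with hRdef
    have hsumM : ∑ m ∈ Finset.univ.erase j, f (y m) = f (s + t) + R := by
      rw [← Finset.add_sum_erase _ (fun m => f (y m)) hiM]
      congr 1
      · rw [hydef, Function.update_self, hxi, hxj]
      · exact Finset.sum_congr rfl fun m hm => by
          rw [hydef, Function.update_of_ne (Finset.mem_erase.mp hm).1]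
    have hsumU : ∑ m, f (x m) = f s + f t + R := by
      rw [← Finset.add_sum_erase _ (fun m => f (x m)) (Finset.mem_univ j),
          ← Finset.add_sum_erase _ (fun m => f (x m)) hiM, hxi, hxj]
      ring
    have hf1 : f 0 < f 1 :=
      hmono (Set.mem_Ici.mpr le_rfl) (Set.mem_Ici.mpr zero_le_one) zero_lt_one
    have hRge : f 1 ≤ R := by
      have h' := Finset.single_le_sum (f := fun m => f (x m))
        (fun m _ => hnn _ (hxnn m)) hkM
      have h2 : f (x k) ≤ R := h'
      rwa [hxk] at h2
    have hRpos : 0 < R := lt_of_lt_of_le (lt_of_le_of_lt hf0 hf1) hRge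
    have h := hCP x hxfeas i j hij
    simp only [CSF.P] at h
    rw [hform _ hMcard y hyfeas i hiM,
        hform _ hUcard x ⟨hxnn, k, Finset.mem_univ k, by rw [hxk]; norm_num⟩ i (Finset.mem_univ i),
        hform _ hUcard x ⟨hxnn, k, Finset.mem_univ k, by rw [hxk]; norm_num⟩ j (Finset.mem_univ j),
        hsumM, hsumU, hxi, hxj,
        show y i = s + t by rw [hydef, Function.update_self, hxi, hxj],
        ← add_div] at h
    have hDpos : 0 < f (s + t) + R := by
      have := hnn (s + t) (by linarith); linarith
    have hSpos : 0 < f s + f t + R := by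
      have := hnn s hs; have := hnn t ht; linarith
    rw [div_le_div_iff₀ hDpos hSpos] at h
    nlinarith [h, hRpos]
  · intro hsub x hfeas i j hij
    have hxnn := hfeas.1
    have hiM : i ∈ Finset.univ.erase j := Finset.mem_erase.mpr ⟨hij, Finset.mem_univ i⟩
    have hMcard : 2 ≤ (Finset.univ.erase j).card := by
      rw [Finset.card_erase_of_mem (Finset.mem_univ j), Finset.card_univ]; omega
    set y := Function.update x i (x i + x j) with hydef
    have hynn : ∀ m, 0 ≤ y m := by
      intro m; rcases eq_or_ne m i with heq | hm
      · rw [hydef, heq, Function.update_self]; exact add_nonneg (hxnn i) (hxnn j)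
      · rw [hydef, Function.update_of_ne hm]; exact hxnn m
    have hyex : ∃ m ∈ Finset.univ.erase j, y m ≠ 0 := by
      obtain ⟨m, hm⟩ := hfeas.2
      by_cases hcase : x i + x j = 0
      · have hxi0 : x i = 0 := by nlinarith [hxnn i, hxnn j]
        have hxj0 : x j = 0 := by linarith [hxnn j]
        have hmi : m ≠ i := by rintro rfl; exact hm hxi0
        have hmj : m ≠ j := by rintro rfl; exact hm hxj0
        exact ⟨m, Finset.mem_erase.mpr ⟨hmj, Finset.mem_univ m⟩,
          by rw [hydef, Function.update_of_ne hmi]; exact hm⟩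
      · exact ⟨i, hiM, by rw [hydef, Function.update_self]; exact hcase⟩
    have hyfeas : FeasibleOn (Finset.univ.erase j) y := ⟨hynn, hyex⟩
    set R := ∑ m ∈ (Finset.univ.erase j).erase i, f (x m) with hRdef
    have hRnn : 0 ≤ R := Finset.sum_nonneg fun m _ => hnn _ (hxnn m)
    have hsumM : ∑ m ∈ Finset.univ.erase j, f (y m) = f (x i + x j) + R := by
      rw [← Finset.add_sum_erase _ (fun m => f (y m)) hiM]
      congr 1
      · rw [hydef, Function.update_self]
      · exact Finset.sum_congr rfl fun m hm => by
          rw [hydef, Function.update_of_ne (Finset.mem_erase.mp hm).1]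
    have hsumU : ∑ m, f (x m) = f (x i) + f (x j) + R := by
      rw [← Finset.add_sum_erase _ (fun m => f (x m)) (Finset.mem_univ j),
          ← Finset.add_sum_erase _ (fun m => f (x m)) hiM]
      ring
    have hDpos : 0 < f (x i + x j) + R := by
      obtain ⟨m, hmM, hm⟩ := hyex
      have hym : 0 < y m := lt_of_le_of_ne (hynn m) (Ne.symm hm)
      have hfym : f 0 < f (y m) :=
        hmono (Set.mem_Ici.mpr le_rfl) (Set.mem_Ici.mpr (hynn m)) hym
      have hle : f (y m) ≤ ∑ m ∈ Finset.univ.erase j, f (y m) :=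
        Finset.single_le_sum (f := fun m => f (y m)) (fun m _ => hnn _ (hynn m)) hmM
      rw [hsumM] at hle
      linarith
    have hSpos : 0 < f (x i) + f (x j) + R := by
      obtain ⟨m, hm⟩ := hfeas.2
      have hxm : 0 < x m := lt_of_le_of_ne (hxnn m) (Ne.symm hm)
      have hfxm : f 0 < f (x m) :=
        hmono (Set.mem_Ici.mpr le_rfl) (Set.mem_Ici.mpr (hxnn m)) hxm
      have hle : f (x m) ≤ ∑ m, f (x m) :=
        Finset.single_le_sum (f := fun m => f (x m)) (fun m _ => hnn _ (hxnn m))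
          (Finset.mem_univ m)
      rw [hsumU] at hle
      linarith
    have hkey : f (x i + x j) ≤ f (x i) + f (x j) := hsub _ _ (hxnn i) (hxnn j)
    show c.p (Finset.univ.erase j) y i ≤ c.P x i + c.P x j
    simp only [CSF.P]
    rw [hform _ hMcard y hyfeas i hiM,
        hform _ hUcard x ⟨hxnn, hfeas.2.choose, Finset.mem_univ _, hfeas.2.choose_spec⟩
          i (Finset.mem_univ i),
        hform _ hUcard x ⟨hxnn, hfeas.2.choose, Finset.mem_univ _, hfeas.2.choose_spec⟩
          j (Finset.mem_univ j),
        hsumM, hsumU, show y i = x i + x j by rw [hydef, Function.update_self],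
        ← add_div, div_le_div_iff₀ hDpos hSpos]
    nlinarith [hkey, hRnn]
end

section
/- Fix r > 0 and let the contest success function on N be the symmetric Tullock CSF p_i^M(x^M) = x_i^r / Σ_{j∈M} x_j^r for every M ⊆ N with |M| ≥ 2, i ∈ M, and x^M ∈ ℝ_+^M \ {0}. Then this CSF satisfies split-proofness (SP) if and only if r ≥ 1. -/
open Finset

lemma real_add_rpow_le {x y p : ℝ} (hx : 0 ≤ x) (hy : 0 ≤ y) (hp : 1 ≤ p) :
    x ^ p + y ^ p ≤ (x + y) ^ p := by
  have h := NNReal.add_rpow_le_rpow_add x.toNNReal y.toNNReal hp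
  have h2 : ((x.toNNReal ^ p + y.toNNReal ^ p : NNReal) : ℝ)
      ≤ (((x.toNNReal + y.toNNReal) ^ p : NNReal) : ℝ) := NNReal.coe_le_coe.2 h
  rw [NNReal.coe_add, NNReal.coe_rpow, NNReal.coe_rpow, NNReal.coe_rpow,
    NNReal.coe_add, Real.coe_toNNReal _ hx, Real.coe_toNNReal _ hy] at h2
  exact h2

lemma div_frac_mono {a b T : ℝ} (hT : 0 ≤ T) (haT : 0 < a + T) (ha : 0 ≤ a)
    (hab : a ≤ b) : a / (a + T) ≤ b / (b + T) := by
  have hbT : 0 < b + T := lt_of_lt_of_le haT (by linarith)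
  rw [div_le_div_iff₀ haT hbT]
  nlinarith

/-- the symmetric Tullock CSF with exponent `r > 0` satisfies
split-proofness iff `r ≥ 1`. -/
theorem statement11 {N : Type*} [Fintype N] [DecidableEq N]
    (hN : 3 ≤ Fintype.card N) (c : CSF N) (r : ℝ) (hr : 0 < r)
    (hform : ∀ M : Finset N, 2 ≤ M.card → ∀ x, FeasibleOn M x → ∀ i ∈ M,
      c.p M x i = x i ^ r / ∑ j ∈ M, x j ^ r) :
    c.SP ↔ 1 ≤ r := by
  have hcardU : 2 ≤ (Finset.univ : Finset N).card := by
    rw [Finset.card_univ]; omega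
  have hcardE : ∀ j : N, 2 ≤ ((Finset.univ : Finset N).erase j).card := by
    intro j
    rw [Finset.card_erase_of_mem (Finset.mem_univ j), Finset.card_univ]
    omega
  constructor
  · -- SP → 1 ≤ r
    intro hSP
    -- pick three distinct elements
    have h1 : (Finset.univ : Finset N).Nonempty := by
      rw [← Finset.card_pos, Finset.card_univ]; omega
    obtain ⟨i, -⟩ := h1
    have h2 : ((Finset.univ : Finset N).erase i).Nonempty := by
      rw [← Finset.card_pos]; have := hcardE i; omega
    obtain ⟨j, hj⟩ := h2
    have hji : j ≠ i := (Finset.mem_erase.1 hj).1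
    have h3 : (((Finset.univ : Finset N).erase i).erase j).Nonempty := by
      rw [← Finset.card_pos, Finset.card_erase_of_mem hj]
      have := hcardE i; omega
    obtain ⟨k0, hk0⟩ := h3
    have hk0j : k0 ≠ j := (Finset.mem_erase.1 hk0).1
    have hk0i : k0 ≠ i := (Finset.mem_erase.1 (Finset.mem_erase.1 hk0).2).1
    set x : N → ℝ := fun k => if k = i then 1 else if k = j then 1 else
      if k = k0 then 1 else 0 with hxdef
    have hxnn : ∀ k, 0 ≤ x k := by
      intro k; simp only [hxdef]
      split_ifs <;> norm_num
    have hxi : x i = 1 := by simp [hxdef]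
    have hxj : x j = 1 := by simp [hxdef, hji]
    have hxk0 : x k0 = 1 := by simp [hxdef, hk0i, hk0j]
    have hfeas : Feasible x := ⟨hxnn, ⟨i, by rw [hxi]; norm_num⟩⟩
    have h01 : (0:ℝ) ^ r = 0 := Real.zero_rpow (ne_of_gt hr)
    have h1r : (1:ℝ) ^ r = 1 := Real.one_rpow r
    -- sum over univ of x ^ r = 3
    have hsum3 : ∑ k, x k ^ r = 3 := by
      have hsub : ({i, j, k0} : Finset N) ⊆ Finset.univ := Finset.subset_univ _
      rw [← Finset.sum_subset hsub (by
        intro k _ hk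
        simp only [Finset.mem_insert, Finset.mem_singleton, not_or] at hk
        obtain ⟨h1, h2, h3⟩ := hk
        simp [hxdef, h1, h2, h3, h01])]
      rw [Finset.sum_insert (by simp [hji.symm, hk0i.symm]),
        Finset.sum_insert (by simp [hk0j.symm]), Finset.sum_singleton,
        hxi, hxj, hxk0, h1r]
      norm_num
    have hPi : c.P x i = 1 / 3 := by
      unfold CSF.P
      rw [hform Finset.univ hcardU x ⟨hxnn, i, Finset.mem_univ i, by rw [hxi]; norm_num⟩
        i (Finset.mem_univ i), hsum3, hxi, h1r]
    have hPj : c.P x j = 1 / 3 := by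
      unfold CSF.P
      rw [hform Finset.univ hcardU x ⟨hxnn, i, Finset.mem_univ i, by rw [hxi]; norm_num⟩
        j (Finset.mem_univ j), hsum3, hxj, h1r]
    -- the merged vector
    set y : N → ℝ := Function.update x i (x i + x j) with hydef
    have hyi : y i = 2 := by rw [hydef, Function.update_self, hxi, hxj]; norm_num
    have hynn : ∀ k, 0 ≤ y k := by
      intro k
      rcases eq_or_ne k i with h | h
      · rw [h, hyi]; norm_num
      · rw [hydef, Function.update_of_ne h]; exact hxnn k
    have hyfeas : FeasibleOn (Finset.univ.erase j) y :=
      ⟨hynn, i, Finset.mem_erase.2 ⟨fun h => hji h.symm, Finset.mem_univ i⟩,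
        by rw [hyi]; norm_num⟩
    have hsumE : ∑ k ∈ Finset.univ.erase j, y k ^ r = 2 ^ r + 1 := by
      have hsub : ({i, k0} : Finset N) ⊆ Finset.univ.erase j := by
        intro k hk
        simp only [Finset.mem_insert, Finset.mem_singleton] at hk
        rcases hk with h | h <;> subst h
        · exact Finset.mem_erase.2 ⟨fun h => hji h.symm, Finset.mem_univ _⟩
        · exact Finset.mem_erase.2 ⟨hk0j, Finset.mem_univ _⟩
      rw [← Finset.sum_subset hsub (by
        intro k hk hk2
        simp only [Finset.mem_insert, Finset.mem_singleton, not_or] at hk2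
        obtain ⟨h1, h3⟩ := hk2
        have h2 : k ≠ j := (Finset.mem_erase.1 hk).1
        rw [hydef, Function.update_of_ne h1]
        simp [hxdef, h1, h2, h3, h01])]
      rw [Finset.sum_insert (by simp [hk0i.symm]), Finset.sum_singleton, hyi,
        hydef, Function.update_of_ne hk0i, hxk0, h1r]
    have hsp := hSP x hfeas i j (fun h => hji h.symm)
    rw [hPi, hPj, hform (Finset.univ.erase j) (hcardE j) y hyfeas i
      (Finset.mem_erase.2 ⟨fun h => hji h.symm, Finset.mem_univ i⟩),
      hsumE, hyi] at hsp
    have h2r : (0:ℝ) < 2 ^ r := Real.rpow_pos_of_pos (by norm_num) r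
    have h2le : (2:ℝ) ≤ 2 ^ r := by
      have h3 : (1:ℝ)/3 + 1/3 = 2/3 := by norm_num
      rw [h3, div_le_div_iff₀ (by norm_num : (0:ℝ) < 3) (by positivity)] at hsp
      nlinarith
    have hfin : (2:ℝ) ^ (1:ℝ) ≤ (2:ℝ) ^ r := by rwa [Real.rpow_one]
    exact (Real.rpow_le_rpow_left_iff (by norm_num : (1:ℝ) < 2)).1 hfin
  · -- 1 ≤ r → SP
    intro hr1 x hx i j hij
    set y : N → ℝ := Function.update x i (x i + x j) with hydef
    have hxi : 0 ≤ x i := hx.1 i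
    have hxj : 0 ≤ x j := hx.1 j
    have hynn : ∀ k, 0 ≤ y k := by
      intro k
      rcases eq_or_ne k i with h | h
      · rw [h, hydef, Function.update_self]; positivity
      · rw [hydef, Function.update_of_ne h]; exact hx.1 k
    have hiM : i ∈ Finset.univ.erase j := Finset.mem_erase.2 ⟨hij, Finset.mem_univ i⟩
    have hyfeas : FeasibleOn (Finset.univ.erase j) y := by
      refine ⟨hynn, ?_⟩
      obtain ⟨k, hk⟩ := hx.2
      rcases eq_or_ne (x i + x j) 0 with h0 | h0
      · have hxi0 : x i = 0 := by linarith [(hx.1 i), (hx.1 j)]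
        have hxj0 : x j = 0 := by linarith [(hx.1 i), (hx.1 j)]
        have hki : k ≠ i := fun h => hk (h ▸ hxi0)
        have hkj : k ≠ j := fun h => hk (h ▸ hxj0)
        exact ⟨k, Finset.mem_erase.2 ⟨hkj, Finset.mem_univ k⟩,
          by rw [hydef, Function.update_of_ne hki]; exact hk⟩
      · exact ⟨i, hiM, by rw [hydef, Function.update_self]; exact h0⟩
    have hxfeasU : FeasibleOn Finset.univ x := by
      obtain ⟨k, hk⟩ := hx.2
      exact ⟨hx.1, k, Finset.mem_univ k, hk⟩
    set T : ℝ := ∑ k ∈ (Finset.univ.erase j).erase i, x k ^ r with hTdef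
    have hTnn : 0 ≤ T := Finset.sum_nonneg fun k _ =>
      Real.rpow_nonneg (hx.1 k) r
    have hSsplit : ∑ k, x k ^ r = x i ^ r + x j ^ r + T := by
      rw [← Finset.add_sum_erase Finset.univ (fun k => x k ^ r) (Finset.mem_univ j),
        ← Finset.add_sum_erase _ (fun k => x k ^ r) hiM, ← hTdef]
      ring
    have hSpos : 0 < x i ^ r + x j ^ r + T := by
      rw [← hSsplit]
      obtain ⟨k, hk⟩ := hx.2
      exact Finset.sum_pos' (fun l _ => Real.rpow_nonneg (hx.1 l) r)
        ⟨k, Finset.mem_univ k, Real.rpow_pos_of_pos (lt_of_le_of_ne (hx.1 k) (Ne.symm hk)) r⟩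
    have hsumE : ∑ k ∈ Finset.univ.erase j, y k ^ r = (x i + x j) ^ r + T := by
      rw [← Finset.add_sum_erase _ (fun k => y k ^ r) hiM, hydef, Function.update_self]
      congr 1
      refine Finset.sum_congr rfl fun k hk => ?_
      rw [Function.update_of_ne (Finset.mem_erase.1 hk).1]
    -- rewrite all three probabilities
    unfold CSF.P
    rw [hform Finset.univ hcardU x hxfeasU i (Finset.mem_univ i),
      hform Finset.univ hcardU x hxfeasU j (Finset.mem_univ j),
      hform (Finset.univ.erase j) (hcardE j) y hyfeas i hiM,
      hsumE, hSsplit, hydef, Function.update_self, ← add_div]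
    have hab : x i ^ r + x j ^ r ≤ (x i + x j) ^ r := real_add_rpow_le hxi hxj hr1
    have := div_frac_mono hTnn hSpos (by positivity) hab
    calc (x i ^ r + x j ^ r) / (x i ^ r + x j ^ r + T)
        ≤ (x i + x j) ^ r / ((x i + x j) ^ r + T) := this
      _ = _ := by ring_nf
end

section
/- Fix r > 0 and let the contest success function on N be the symmetric Tullock CSF p_i^M(x^M) = x_i^r / Σ_{j∈M} x_j^r for every M ⊆ N with |M| ≥ 2, i ∈ M, and x^M ∈ ℝ_+^M \ {0}. Then this CSF satisfies collusion-proofness (CP) if and only if 0 < r ≤ 1. -/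
open Finset

private lemma rpow_subadd {p a b : ℝ} (ha : 0 ≤ a) (hb : 0 ≤ b) (hp : 0 ≤ p) (hp1 : p ≤ 1) :
    (a + b) ^ p ≤ a ^ p + b ^ p := by
  have h := NNReal.rpow_add_le_add_rpow a.toNNReal b.toNNReal hp hp1
  have := NNReal.coe_le_coe.mpr h
  push_cast [NNReal.coe_rpow, Real.coe_toNNReal a ha, Real.coe_toNNReal b hb] at this
  simpa [Real.toNNReal_add ha hb, NNReal.coe_rpow, Real.coe_toNNReal _ (add_nonneg ha hb)]
    using this

/-- the symmetric Tullock CSF with exponent `r > 0` satisfies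
collusion-proofness iff `0 < r ≤ 1`. -/
theorem statement12 {N : Type*} [Fintype N] [DecidableEq N]
    (hN : 3 ≤ Fintype.card N) (c : CSF N) (r : ℝ) (hr : 0 < r)
    (hform : ∀ M : Finset N, 2 ≤ M.card → ∀ x, FeasibleOn M x → ∀ i ∈ M,
      c.p M x i = x i ^ r / ∑ j ∈ M, x j ^ r) :
    c.CP ↔ (0 < r ∧ r ≤ 1) := by
  classical
  have hcard2 : 2 ≤ (Finset.univ : Finset N).card := by
    rw [Finset.card_univ]; omega
  have hMcard : ∀ j : N, 2 ≤ ((Finset.univ : Finset N).erase j).card := by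
    intro j
    rw [Finset.card_erase_of_mem (Finset.mem_univ j), Finset.card_univ]; omega
  constructor
  · intro hCP
    refine ⟨hr, ?_⟩
    by_contra hcon
    push_neg at hcon
    obtain ⟨i, j, hij⟩ := Fintype.exists_pair_of_one_lt_card (by omega : 1 < Fintype.card N)
    set x : N → ℝ := fun _ => 1 with hxdef
    have hfeas : Feasible x := ⟨fun _ => zero_le_one, ⟨i, one_ne_zero⟩⟩
    have hkey := hCP x hfeas i j hij
    have hPform : ∀ k : N, c.P x k = 1 / (Fintype.card N : ℝ) := by
      intro k
      rw [CSF.P, hform Finset.univ hcard2 x ⟨hfeas.1, i, Finset.mem_univ i, one_ne_zero⟩ k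
        (Finset.mem_univ k)]
      simp [hxdef, Real.one_rpow]
    have hiMem : i ∈ (Finset.univ : Finset N).erase j :=
      Finset.mem_erase.mpr ⟨hij, Finset.mem_univ i⟩
    set y : N → ℝ := Function.update x i (x i + x j) with hydef
    have hyfeas : FeasibleOn ((Finset.univ : Finset N).erase j) y := by
      refine ⟨fun k => ?_, i, hiMem, by simp [hydef, hxdef]⟩
      by_cases hk : k = i
      · subst hk; simp only [hydef, Function.update_self, hxdef]; norm_num
      · simp [hydef, Function.update_of_ne hk, hxdef]
    rw [hform _ (hMcard j) y hyfeas i hiMem] at hkey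
    have hyi : y i = 2 := by
      simp only [hydef, Function.update_self, hxdef]; norm_num
    have hsum : ∑ k ∈ (Finset.univ : Finset N).erase j, y k ^ r
        = 2 ^ r + ((Fintype.card N : ℝ) - 2) := by
      rw [← Finset.add_sum_erase _ _ hiMem, hyi]
      congr 1
      have : ∀ k ∈ (((Finset.univ : Finset N).erase j).erase i), y k ^ r = 1 := by
        intro k hk
        have hki : k ≠ i := (Finset.mem_erase.mp hk).1
        simp [hydef, Function.update_of_ne hki, hxdef, Real.one_rpow]
      rw [Finset.sum_congr rfl this, Finset.sum_const,
        Finset.card_erase_of_mem hiMem, Finset.card_erase_of_mem (Finset.mem_univ j),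
        Finset.card_univ, Nat.sub_sub, nsmul_eq_mul, mul_one,
        Nat.cast_sub (by omega : 1 + 1 ≤ Fintype.card N)]
      norm_num
    rw [hyi, hsum, hPform i, hPform j] at hkey
    have h2r : (2:ℝ) < 2 ^ r := by
      calc (2:ℝ) = 2 ^ (1:ℝ) := (Real.rpow_one 2).symm
      _ < 2 ^ r := Real.rpow_lt_rpow_of_exponent_lt one_lt_two hcon
    have hnR : (3:ℝ) ≤ (Fintype.card N : ℝ) := by exact_mod_cast hN
    have hden : (0:ℝ) < 2 ^ r + ((Fintype.card N : ℝ) - 2) := by nlinarith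
    rw [div_le_iff₀ hden] at hkey
    have hnpos : (0:ℝ) < (Fintype.card N : ℝ) := by linarith
    rw [← add_div, div_mul_eq_mul_div, le_div_iff₀ hnpos] at hkey
    nlinarith
  · rintro ⟨-, hr1⟩ x hx i j hij
    have ha : 0 ≤ x i := hx.1 i
    have hb : 0 ≤ x j := hx.1 j
    have hiMem : i ∈ (Finset.univ : Finset N).erase j :=
      Finset.mem_erase.mpr ⟨hij, Finset.mem_univ i⟩
    set y : N → ℝ := Function.update x i (x i + x j) with hydef
    have hy_nonneg : ∀ k, 0 ≤ y k := by
      intro k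
      by_cases hk : k = i
      · subst hk; simp [hydef]; linarith
      · simp [hydef, Function.update_of_ne hk]; exact hx.1 k
    have hyfeas : FeasibleOn ((Finset.univ : Finset N).erase j) y := by
      refine ⟨hy_nonneg, ?_⟩
      obtain ⟨k, hk⟩ := hx.2
      by_cases hkij : k = i ∨ k = j
      · refine ⟨i, hiMem, ?_⟩
        have : 0 < x i + x j := by
          rcases hkij with rfl | rfl
          · have := (hx.1 k).lt_of_ne (Ne.symm hk); linarith
          · have := (hx.1 k).lt_of_ne (Ne.symm hk); linarith
        simp [hydef]; linarith
      · push_neg at hkij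
        refine ⟨k, Finset.mem_erase.mpr ⟨hkij.2, Finset.mem_univ k⟩, ?_⟩
        simpa [hydef, Function.update_of_ne hkij.1] using hk
    rw [hform _ (hMcard j) y hyfeas i hiMem,
      CSF.P, CSF.P, hform Finset.univ hcard2 x ⟨hx.1, hx.2.choose, Finset.mem_univ _,
        hx.2.choose_spec⟩ i (Finset.mem_univ i),
      hform Finset.univ hcard2 x ⟨hx.1, hx.2.choose, Finset.mem_univ _,
        hx.2.choose_spec⟩ j (Finset.mem_univ j)]
    set S : ℝ := ∑ k ∈ (((Finset.univ : Finset N).erase j).erase i), x k ^ r with hSdef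
    have hyi : y i = x i + x j := by simp [hydef]
    have hsumy : ∑ k ∈ (Finset.univ : Finset N).erase j, y k ^ r = (x i + x j) ^ r + S := by
      rw [← Finset.add_sum_erase _ _ hiMem, hyi]
      congr 1
      refine Finset.sum_congr rfl fun k hk => ?_
      have hki : k ≠ i := (Finset.mem_erase.mp hk).1
      simp [hydef, Function.update_of_ne hki]
    have hsumx : ∑ k ∈ (Finset.univ : Finset N), x k ^ r = x j ^ r + (x i ^ r + S) := by
      rw [← Finset.add_sum_erase _ (fun k => x k ^ r) (Finset.mem_univ j),
        ← Finset.add_sum_erase _ (fun k => x k ^ r) hiMem]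
    have hS : 0 ≤ S := Finset.sum_nonneg fun k _ => Real.rpow_nonneg (hx.1 k) r
    have key : (x i + x j) ^ r ≤ x i ^ r + x j ^ r := rpow_subadd ha hb hr.le hr1
    have hT : 0 < x j ^ r + (x i ^ r + S) := by
      obtain ⟨k, hk⟩ := hx.2
      have hk' : 0 < x k ^ r := Real.rpow_pos_of_pos ((hx.1 k).lt_of_ne (Ne.symm hk)) r
      have hle : x k ^ r ≤ ∑ k ∈ (Finset.univ : Finset N), x k ^ r :=
        Finset.single_le_sum (fun m _ => Real.rpow_nonneg (hx.1 m) r) (Finset.mem_univ k)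
      rw [hsumx] at hle
      linarith
    have hD : 0 < (x i + x j) ^ r + S := by
      have h1 : x i ^ r ≤ (x i + x j) ^ r :=
        Real.rpow_le_rpow ha (le_add_of_nonneg_right hb) hr.le
      have h2 : x j ^ r ≤ (x i + x j) ^ r :=
        Real.rpow_le_rpow hb (le_add_of_nonneg_left ha) hr.le
      linarith
    rw [hsumy, hsumx, hyi, ← add_div, div_le_div_iff₀ hD hT]
    nlinarith [mul_le_mul_of_nonneg_right key hS]
end

section
/- Fix b ≥ 0 and r > 0 and let the contest success function on N be the symmetric CSF with luck p_i^M(x^M) = (b + x_i^r) / Σ_{j∈M} (b + x_j^r) for every M ⊆ N with |M| ≥ 2, i ∈ M, and x^M ∈ ℝ_+^M \ {0}. Then this CSF satisfies collusion-proofness (CP) if and only if 0 < r ≤ 1. -/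
open Finset

lemma key_arith13 {n P Q : ℝ} (hn : 3 ≤ n) (hP : 0 < P) (h2 : 2 * P < Q)
    (h : Q * (n * P) ≤ (P + P) * (Q + (n - 2) * P)) : False := by
  have hx : 0 < (n - 2) * (P * (Q - 2 * P)) :=
    mul_pos (by linarith) (mul_pos hP (by linarith))
  nlinarith [hx]

lemma key_arith13b {bb s ui uj C : ℝ} (hC : 0 ≤ C) (hsub : s ≤ ui + uj) (hb : 0 ≤ bb) :
    (bb + s) * ((bb + uj) + ((bb + ui) + C)) ≤ ((bb + ui) + (bb + uj)) * ((bb + s) + C) := by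
  nlinarith [mul_nonneg hC (show 0 ≤ bb + ui + uj - s by linarith)]

lemma rpow_add_le13 {a b' r : ℝ} (ha : 0 ≤ a) (hb : 0 ≤ b') (hr0 : 0 ≤ r) (hr1 : r ≤ 1) :
    (a + b') ^ r ≤ a ^ r + b' ^ r := by
  lift a to NNReal using ha
  lift b' to NNReal using hb
  rw [← NNReal.coe_add, ← NNReal.coe_rpow, ← NNReal.coe_rpow, ← NNReal.coe_rpow,
    ← NNReal.coe_add, NNReal.coe_le_coe]
  exact NNReal.rpow_add_le_add_rpow _ _ hr0 hr1

/-- the symmetric CSF with luck `b ≥ 0` and exponent `r > 0` satisfies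
collusion-proofness iff `0 < r ≤ 1`. -/
theorem statement13 {N : Type*} [Fintype N] [DecidableEq N]
    (hN : 3 ≤ Fintype.card N) (c : CSF N) (b r : ℝ) (hb : 0 ≤ b) (hr : 0 < r)
    (hform : ∀ M : Finset N, 2 ≤ M.card → ∀ x, FeasibleOn M x → ∀ i ∈ M,
      c.p M x i = (b + x i ^ r) / ∑ j ∈ M, (b + x j ^ r)) :
    c.CP ↔ (0 < r ∧ r ≤ 1) := by
  have huniv2 : 2 ≤ (Finset.univ : Finset N).card := by
    rw [Finset.card_univ]; omega
  constructor
  · intro hCP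
    refine ⟨hr, ?_⟩
    by_contra hr1
    push_neg at hr1
    have h2r : (2:ℝ) < 2 ^ r := by
      calc (2:ℝ) = 2 ^ (1:ℝ) := (Real.rpow_one 2).symm
        _ < 2 ^ r := (Real.rpow_lt_rpow_left_iff (by norm_num)).mpr hr1
    have h2ne : (0:ℝ) < 2 ^ r - 2 := by linarith
    obtain ⟨i, j, hij⟩ := Fintype.exists_pair_of_one_lt_card
      (show 1 < Fintype.card N by omega)
    obtain ⟨T, hT, hTval⟩ : ∃ T : ℝ, 0 < T ∧ (2 ^ r - 2) * T = b + (2 ^ r - 2) :=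
      ⟨b / (2 ^ r - 2) + 1, by
        have := div_nonneg hb h2ne.le; linarith, by field_simp⟩
    set t : ℝ := T ^ r⁻¹ with htdef
    have ht : 0 < t := Real.rpow_pos_of_pos hT _
    have htr : t ^ r = T := Real.rpow_inv_rpow hT.le hr.ne'
    set x : N → ℝ := fun _ => t with hxdef
    have hfeas : Feasible x := ⟨fun _ => ht.le, i, ht.ne'⟩
    have hkey := hCP x hfeas i j hij
    set n : ℕ := Fintype.card N with hndef
    have hsum : ∑ m : N, (b + x m ^ r) = (n : ℝ) * (b + T) := by
      have hmm : ∀ m ∈ Finset.univ, b + x m ^ r = b + T := fun m _ => by rw [show x m = t from rfl, htr]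
      rw [Finset.sum_congr rfl hmm, Finset.sum_const, Finset.card_univ, nsmul_eq_mul]
    have hPi : c.P x i = (b + T) / ((n : ℝ) * (b + T)) := by
      have := hform Finset.univ huniv2 x ⟨hfeas.1, i, Finset.mem_univ i, ht.ne'⟩ i
        (Finset.mem_univ i)
      rw [CSF.P, this, hsum, show x i = t from rfl, htr]
    have hPj : c.P x j = (b + T) / ((n : ℝ) * (b + T)) := by
      have := hform Finset.univ huniv2 x ⟨hfeas.1, i, Finset.mem_univ i, ht.ne'⟩ j
        (Finset.mem_univ j)
      rw [CSF.P, this, hsum, show x j = t from rfl, htr]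
    set y : N → ℝ := Function.update x i (x i + x j) with hydef
    have hyi : y i = t + t := Function.update_self i _ x
    have hyo : ∀ m, m ≠ i → y m = t := fun m hm => Function.update_of_ne hm _ x
    have hiej : i ∈ Finset.univ.erase j := Finset.mem_erase.mpr ⟨hij, Finset.mem_univ i⟩
    have hcarde : 2 ≤ (Finset.univ.erase j).card := by
      rw [Finset.card_erase_of_mem (Finset.mem_univ j), Finset.card_univ]; omega
    have hyfeas : FeasibleOn (Finset.univ.erase j) y := by
      refine ⟨fun m => ?_, i, hiej, by rw [hyi]; positivity⟩
      by_cases hm : m = i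
      · subst hm; rw [hyi]; positivity
      · rw [hyo m hm]; exact ht.le
    have hS : (t + t) ^ r = 2 ^ r * T := by
      rw [show t + t = 2 * t by ring, Real.mul_rpow (by norm_num) ht.le, htr]
    have hsum2 : ∑ m ∈ Finset.univ.erase j, (b + y m ^ r)
        = (b + 2 ^ r * T) + ((n : ℝ) - 2) * (b + T) := by
      rw [← Finset.add_sum_erase _ _ hiej, hyi, hS]
      have hc : ((Finset.univ.erase j).erase i).card = n - 2 := by
        rw [Finset.card_erase_of_mem hiej, Finset.card_erase_of_mem (Finset.mem_univ j),
          Finset.card_univ]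
        omega
      have heq : ∑ m ∈ (Finset.univ.erase j).erase i, (b + y m ^ r)
          = ∑ m ∈ (Finset.univ.erase j).erase i, (b + T) := by
        apply Finset.sum_congr rfl
        intro m hm
        rw [hyo m (Finset.ne_of_mem_erase hm), htr]
      rw [heq, Finset.sum_const, hc, nsmul_eq_mul]
      push_cast [Nat.cast_sub (show 2 ≤ n by omega)]
      ring
    have hp : c.p (Finset.univ.erase j) y i
        = (b + 2 ^ r * T) / ((b + 2 ^ r * T) + ((n : ℝ) - 2) * (b + T)) := by
      rw [hform (Finset.univ.erase j) hcarde y hyfeas i hiej, hyi, hS, hsum2]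
    rw [hp, hPi, hPj] at hkey
    have hbT : 0 < b + T := by linarith
    have hbS : 0 < b + 2 ^ r * T := by nlinarith
    have hn3 : (3 : ℝ) ≤ (n : ℝ) := by exact_mod_cast hN
    have hD : 0 < (b + 2 ^ r * T) + ((n : ℝ) - 2) * (b + T) := by nlinarith
    have hA : 0 < (n : ℝ) * (b + T) := by nlinarith
    rw [← add_div, div_le_div_iff₀ hD hA] at hkey
    have hST : b + 2 * T < 2 ^ r * T := by nlinarith
    exact key_arith13 hn3 hbT (by linarith) hkey
  · rintro ⟨-, hr1⟩
    intro x hx i j hij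
    obtain ⟨hxnn, k, hk⟩ := hx
    have hxk : 0 < x k := lt_of_le_of_ne (hxnn k) (Ne.symm hk)
    set f : N → ℝ := fun m => b + x m ^ r with hfdef
    have hfnn : ∀ m, 0 ≤ f m := fun m => by
      have := Real.rpow_nonneg (hxnn m) r; simp only [hfdef]; linarith
    have hA : 0 < ∑ m : N, f m := by
      apply Finset.sum_pos' (fun m _ => hfnn m)
      exact ⟨k, Finset.mem_univ k, by
        have := Real.rpow_pos_of_pos hxk r; simp only [hfdef]; linarith⟩
    have hPi : c.P x i = f i / ∑ m : N, f m := by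
      rw [CSF.P, hform Finset.univ huniv2 x ⟨hxnn, k, Finset.mem_univ k, hk⟩ i
        (Finset.mem_univ i)]
    have hPj : c.P x j = f j / ∑ m : N, f m := by
      rw [CSF.P, hform Finset.univ huniv2 x ⟨hxnn, k, Finset.mem_univ k, hk⟩ j
        (Finset.mem_univ j)]
    set y : N → ℝ := Function.update x i (x i + x j) with hydef
    have hyi : y i = x i + x j := Function.update_self i _ x
    have hyo : ∀ m, m ≠ i → y m = x m := fun m hm => Function.update_of_ne hm _ x
    have hiej : i ∈ Finset.univ.erase j := Finset.mem_erase.mpr ⟨hij, Finset.mem_univ i⟩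
    have hcarde : 2 ≤ (Finset.univ.erase j).card := by
      rw [Finset.card_erase_of_mem (Finset.mem_univ j), Finset.card_univ]; omega
    have hynn : ∀ m, 0 ≤ y m := by
      intro m
      by_cases hm : m = i
      · rw [hm, hyi]; exact add_nonneg (hxnn i) (hxnn j)
      · rw [hyo m hm]; exact hxnn m
    have hyfeas : FeasibleOn (Finset.univ.erase j) y := by
      refine ⟨hynn, ?_⟩
      by_cases hki : k = i
      · refine ⟨i, hiej, ?_⟩
        rw [hyi]
        subst hki
        have := hxnn j
        exact ne_of_gt (by linarith)
      · by_cases hkj : k = j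
        · refine ⟨i, hiej, ?_⟩
          rw [hyi]
          subst hkj
          have := hxnn i
          exact ne_of_gt (by linarith)
        · exact ⟨k, Finset.mem_erase.mpr ⟨hkj, Finset.mem_univ k⟩, by rw [hyo k hki]; exact hk⟩
    have hp : c.p (Finset.univ.erase j) y i
        = (b + (x i + x j) ^ r) / ∑ m ∈ Finset.univ.erase j, (b + y m ^ r) :=
      by rw [hform (Finset.univ.erase j) hcarde y hyfeas i hiej, hyi]
    set C : ℝ := ∑ m ∈ (Finset.univ.erase j).erase i, f m with hCdef
    have hCnn : 0 ≤ C := Finset.sum_nonneg fun m _ => hfnn m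
    have hD : ∑ m ∈ Finset.univ.erase j, (b + y m ^ r) = (b + (x i + x j) ^ r) + C := by
      rw [← Finset.add_sum_erase _ _ hiej, hyi]
      congr 1
      apply Finset.sum_congr rfl
      intro m hm
      rw [hyo m (Finset.ne_of_mem_erase hm)]
    have hAsplit : ∑ m : N, f m = f j + (f i + C) := by
      rw [← Finset.add_sum_erase _ f (Finset.mem_univ j), ← Finset.add_sum_erase _ f hiej]
    have hsub : (x i + x j) ^ r ≤ x i ^ r + x j ^ r :=
      rpow_add_le13 (hxnn i) (hxnn j) hr.le hr1
    have hs0 : 0 ≤ (x i + x j) ^ r := Real.rpow_nonneg (add_nonneg (hxnn i) (hxnn j)) r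
    have hDpos : 0 < (b + (x i + x j) ^ r) + C := by
      rw [← hD]
      apply Finset.sum_pos' (fun m hm => by
        have := Real.rpow_nonneg (hynn m) r; positivity)
      obtain ⟨m, hm, hym⟩ := hyfeas.2
      have hym' : 0 < y m := lt_of_le_of_ne (hynn m) (Ne.symm hym)
      exact ⟨m, hm, by have := Real.rpow_pos_of_pos hym' r; positivity⟩
    rw [hp, hD, hPi, hPj, ← add_div, div_le_div_iff₀ hDpos hA, hAsplit]
    simp only [hfdef]
    exact key_arith13b hCnn hsub hb
end

section
/- If a contest success function on N satisfies strict monotonicity (SM) and Luce's choice axiom (LCA), then for all x ∈ ℝ_+^N \ {0}, all i ∈ N, all j ∈ N \ {i}, and all x_i' ∈ ℝ_+ with x_i < x_i': p_j^N(x_i, x_{-i}) ≥ p_j^N(x_i', x_{-i}), and equality holds only when p_j^N(x_i, x_{-i}) = 0 (which requires x_j = 0). -/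
open Finset

section Aux15

variable {N : Type*} [Fintype N] [DecidableEq N]

private lemma aux_card2 (hN : 3 ≤ Fintype.card N) : 2 ≤ (Finset.univ : Finset N).card := by
  rw [Finset.card_univ]; omega

private lemma aux_feasOn_univ {x : N → ℝ} (h : Feasible x) : FeasibleOn Finset.univ x :=
  ⟨h.1, by obtain ⟨i, hi⟩ := h.2; exact ⟨i, Finset.mem_univ i, hi⟩⟩

private lemma aux_P_nonneg (hN : 3 ≤ Fintype.card N) (c : CSF N) {x : N → ℝ}
    (h : Feasible x) (i : N) : 0 ≤ c.P x i :=
  c.nonneg Finset.univ (aux_card2 hN) x (aux_feasOn_univ h) i (Finset.mem_univ i)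

private lemma aux_P_le_one (hN : 3 ≤ Fintype.card N) (c : CSF N) {x : N → ℝ}
    (h : Feasible x) (i : N) : c.P x i ≤ 1 :=
  c.le_one Finset.univ (aux_card2 hN) x (aux_feasOn_univ h) i (Finset.mem_univ i)

private lemma aux_P_sum (hN : 3 ≤ Fintype.card N) (c : CSF N) {x : N → ℝ}
    (h : Feasible x) : ∑ i, c.P x i = 1 :=
  c.sum_eq_one Finset.univ (aux_card2 hN) x (aux_feasOn_univ h)

private lemma aux_feas_update {x : N → ℝ} (hx : ∀ k, 0 ≤ x k) (i : N) {t : ℝ} (ht : 0 < t) :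
    Feasible (Function.update x i t) := by
  constructor
  · intro k
    rcases eq_or_ne k i with rfl | h
    · simpa using ht.le
    · simpa [Function.update_of_ne h] using hx k
  · exact ⟨i, by simp [ht.ne']⟩

private lemma upd_ne {f : N → ℝ} {a b : N} (h : b ≠ a) (t : ℝ) :
    Function.update f a t b = f b := Function.update_of_ne h t f

private lemma aux_sum_erase (hN : 3 ≤ Fintype.card N) (c : CSF N) {x : N → ℝ}
    (h : Feasible x) (i : N) :
    ∑ k ∈ Finset.univ.erase i, c.P x k = 1 - c.P x i := by
  have h2 := Finset.sum_erase_add Finset.univ (c.P x) (Finset.mem_univ i)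
  rw [aux_P_sum hN c h] at h2
  linarith

private lemma aux_P_lt_one (hN : 3 ≤ Fintype.card N) (c : CSF N) {x : N → ℝ}
    (hx : Feasible x) {i k : N} (hki : k ≠ i) (hk : 0 < c.P x k) : c.P x i < 1 := by
  have h1 : c.P x i + c.P x k ≤ ∑ l, c.P x l := by
    have h2 : ∑ l ∈ ({i, k} : Finset N), c.P x l ≤ ∑ l ∈ Finset.univ, c.P x l :=
      Finset.sum_le_sum_of_subset_of_nonneg (Finset.subset_univ _)
        (fun l _ _ => aux_P_nonneg hN c hx l)
    rwa [Finset.sum_pair (Ne.symm hki)] at h2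
  rw [aux_P_sum hN c hx] at h1
  linarith

end Aux15

section Aux15b
set_option linter.unusedSectionVars false
variable {N : Type*} [Fintype N] [DecidableEq N]

private lemma aux_posP (hN : 3 ≤ Fintype.card N) (c : CSF N) (hSM : c.SM) (hLCA : c.LCA) :
    ∀ x : N → ℝ, Feasible x → ∀ i, 0 < x i → 0 < c.P x i := by
  intro x hx i hxi
  by_contra hP
  have hP0 : c.P x i = 0 := le_antisymm (not_lt.1 hP) (aux_P_nonneg hN c hx i)
  set z := Function.update x i (x i / 2) with hzdef
  have hzfeas : Feasible z := aux_feas_update hx.1 i (by linarith)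
  have hzi : z i = x i / 2 := by simp [hzdef]
  have hxz : Function.update z i (x i) = x := by
    rw [hzdef, Function.update_idem, Function.update_eq_self]
  have hz1 : c.P z i = 1 := by
    rcases lt_or_eq_of_le (aux_P_le_one hN c hzfeas i) with hlt | he
    · exfalso
      have h2 := hSM z hzfeas i hlt (x i) (by rw [hzi]; linarith)
      rw [hxz, hP0] at h2
      exact absurd (aux_P_nonneg hN c hzfeas i) (not_le.2 h2)
    · exact he
  have hzzero : ∀ l, l ≠ i → c.P z l = 0 := by
    intro l hl
    have hsum : ∑ k ∈ Finset.univ.erase i, c.P z k = 0 := by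
      rw [aux_sum_erase hN c hzfeas i, hz1]; ring
    have h3 := (Finset.sum_eq_zero_iff_of_nonneg
      (fun k _ => aux_P_nonneg hN c hzfeas k)).1 hsum
    exact h3 l (Finset.mem_erase.2 ⟨hl, Finset.mem_univ l⟩)
  obtain ⟨k, hk⟩ : ∃ k, 0 < c.P x k := by
    by_contra h
    push_neg at h
    have h4 : ∑ l, c.P x l = 0 :=
      Finset.sum_eq_zero (fun l _ => le_antisymm (h l) (aux_P_nonneg hN c hx l))
    rw [aux_P_sum hN c hx] at h4; norm_num at h4
  have hki : k ≠ i := by rintro rfl; rw [hP0] at hk; exact lt_irrefl 0 hk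
  set M : Finset N := {i, k} with hMdef
  have hM2 : 2 ≤ M.card := by rw [hMdef, Finset.card_pair (Ne.symm hki)]
  have hiM : i ∈ M := by rw [hMdef]; exact Finset.mem_insert_self i {k}
  have hkM : k ∈ M := by rw [hMdef]; simp
  have hsum_pair : ∀ f : N → ℝ, ∑ l ∈ M, f l = f i + f k := by
    intro f; rw [hMdef]; exact Finset.sum_pair (Ne.symm hki)
  have hfx : FeasibleOn M x := ⟨hx.1, i, hiM, ne_of_gt hxi⟩
  have hLx := hLCA x hx M hM2 ⟨i, hiM, ne_of_gt hxi⟩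
  have hpxk : c.p M x k = 1 := by
    have h5 := hLx k hkM
    rw [hsum_pair, hP0, zero_add] at h5
    have h6 : (c.p M x k - 1) * c.P x k = 0 := by linarith [h5, mul_comm (c.p M x k) (c.P x k)]
    rcases mul_eq_zero.1 h6 with h7 | h7
    · linarith
    · exact absurd h7 (ne_of_gt hk)
  have hpxi : c.p M x i = 0 := by
    have hs := c.sum_eq_one M hM2 x hfx
    rw [hsum_pair] at hs
    linarith
  have hpzi : c.p M z i = 1 := by
    have hfz : z i ≠ 0 := by rw [hzi]; positivity
    have h5 := hLCA z hzfeas M hM2 ⟨i, hiM, hfz⟩ i hiM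
    rw [hsum_pair, hz1, hzzero k hki, add_zero, mul_one] at h5
    exact h5.symm
  obtain ⟨m, hmi, hmk⟩ : ∃ m, m ≠ i ∧ m ≠ k := by
    by_contra h
    push_neg at h
    have hsub : (Finset.univ : Finset N) ⊆ {i, k} := by
      intro l _
      rcases eq_or_ne l i with rfl | hl
      · exact Finset.mem_insert_self l {k}
      · rw [h l hl]; simp
    have h8 := Finset.card_le_card hsub
    rw [Finset.card_univ, Finset.card_pair (Ne.symm hki)] at h8
    omega
  set v := Function.update z m (z m + 1) with hvdef
  have hvfeas : Feasible v := aux_feas_update hzfeas.1 m (by linarith [hzfeas.1 m])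
  have hPzm : c.P z m = 0 := hzzero m hmi
  have hPvm : 0 < c.P v m := by
    have h9 := hSM z hzfeas m (by rw [hPzm]; norm_num) (z m + 1) (by linarith)
    rw [hPzm] at h9; exact h9
  have hvi : v i = x i / 2 := by rw [hvdef, upd_ne (Ne.symm hmi), hzi]
  have hvk : v k = x k := by rw [hvdef, upd_ne (Ne.symm hmk), hzdef, upd_ne hki]
  have hPvi_lt1 : c.P v i < 1 := aux_P_lt_one hN c hvfeas hmi hPvm
  set v' := Function.update v i (x i) with hv'def
  have hv'feas : Feasible v' := aux_feas_update hvfeas.1 i hxi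
  have hv'i : v' i = x i := by rw [hv'def, Function.update_self]
  have hv'k : v' k = x k := by rw [hv'def, upd_ne hki, hvk]
  have hagree : ∀ l ∈ M, x l = v' l := by
    intro l hl
    rw [hMdef] at hl
    rcases Finset.mem_insert.1 hl with rfl | hl
    · exact hv'i.symm
    · rw [Finset.mem_singleton.1 hl]; exact hv'k.symm
  have hpv'i : c.p M v' i = 0 := by
    rw [← c.restrict M hM2 x v' hfx hagree i hiM]; exact hpxi
  have hPv'i : c.P v' i = 0 := by
    have h10 := hLCA v' hv'feas M hM2 ⟨i, hiM, by rw [hv'i]; exact ne_of_gt hxi⟩ i hiM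
    rw [hpv'i, zero_mul] at h10; exact h10
  have h11 := hSM v hvfeas i hPvi_lt1 (x i) (by rw [hvi]; linarith)
  rw [← hv'def, hPv'i] at h11
  exact absurd (aux_P_nonneg hN c hvfeas i) (not_le.2 h11)

end Aux15b

section Aux15c
set_option linter.unusedSectionVars false
variable {N : Type*} [Fintype N] [DecidableEq N]

private lemma aux_scale (hN : 3 ≤ Fintype.card N) (c : CSF N) (hSM : c.SM) (hLCA : c.LCA)
    {x : N → ℝ} (hx : Feasible x) (i : N) {k : N} (hki : k ≠ i) (hk : x k ≠ 0)
    {xi' : ℝ} (hlt : x i < xi') :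
    ∃ κ : ℝ, 0 ≤ κ ∧ κ < 1 ∧ c.P x i < c.P (Function.update x i xi') i ∧
      ∀ j, j ≠ i → c.P (Function.update x i xi') j = κ * c.P x j := by
  have hxi'pos : 0 < xi' := lt_of_le_of_lt (hx.1 i) hlt
  set x' := Function.update x i xi' with hx'def
  have hx' : Feasible x' := aux_feas_update hx.1 i hxi'pos
  have hxk_pos : 0 < x k := lt_of_le_of_ne (hx.1 k) (Ne.symm hk)
  have hPk : 0 < c.P x k := aux_posP hN c hSM hLCA x hx k hxk_pos
  have hPi1 : c.P x i < 1 := aux_P_lt_one hN c hx hki hPk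
  have hSMi := hSM x hx i hPi1 xi' hlt
  rw [← hx'def] at hSMi
  set M := Finset.univ.erase i with hMdef
  have hM2 : 2 ≤ M.card := by
    rw [hMdef, Finset.card_erase_of_mem (Finset.mem_univ i), Finset.card_univ]; omega
  have hkM : k ∈ M := Finset.mem_erase.2 ⟨hki, Finset.mem_univ k⟩
  have hx'k : x' k = x k := upd_ne hki xi'
  have hfMx : FeasibleOn M x := ⟨hx.1, k, hkM, hk⟩
  have hagree : ∀ l ∈ M, x l = x' l := by
    intro l hl
    have hli : l ≠ i := (Finset.mem_erase.1 (hMdef ▸ hl)).1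
    exact (upd_ne hli xi').symm
  have hLx := hLCA x hx M hM2 ⟨k, hkM, hk⟩
  have hLx' := hLCA x' hx' M hM2 ⟨k, hkM, by rw [hx'k]; exact hk⟩
  have hdpos : 0 < 1 - c.P x i := by linarith
  refine ⟨(1 - c.P x' i) / (1 - c.P x i), ?_, ?_, hSMi, ?_⟩
  · apply div_nonneg _ hdpos.le
    have := aux_P_le_one hN c hx' i; linarith
  · rw [div_lt_one hdpos]; linarith
  · intro j hj
    have hjM : j ∈ M := Finset.mem_erase.2 ⟨hj, Finset.mem_univ j⟩
    have h1 := hLx j hjM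
    have h2 := hLx' j hjM
    rw [hMdef] at h1 h2
    rw [aux_sum_erase hN c hx i] at h1
    rw [aux_sum_erase hN c hx' i] at h2
    have h3 : c.p M x j = c.p M x' j := c.restrict M hM2 x x' hfMx hagree j hjM
    rw [hMdef] at h3
    rw [← h3] at h2
    rw [h2, h1]
    field_simp

private lemma aux_ratio (hN : 3 ≤ Fintype.card N) (c : CSF N) (hLCA : c.LCA) {u v : N → ℝ}
    (hu : Feasible u) (hv : Feasible v) {i j : N} (hij : i ≠ j)
    (hi : u i = v i) (hj : u j = v j) (hui : u i ≠ 0)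
    (hPu : 0 < c.P u i) (hPv : 0 < c.P v i) :
    c.P u j / c.P u i = c.P v j / c.P v i := by
  set M : Finset N := {i, j} with hMdef
  have hM2 : 2 ≤ M.card := by rw [hMdef, Finset.card_pair hij]
  have hiM : i ∈ M := by rw [hMdef]; exact Finset.mem_insert_self i {j}
  have hjM : j ∈ M := by rw [hMdef]; simp
  have hsp : ∀ f : N → ℝ, ∑ l ∈ M, f l = f i + f j := by
    intro f; rw [hMdef]; exact Finset.sum_pair hij
  have hLu := hLCA u hu M hM2 ⟨i, hiM, hui⟩
  have hLv := hLCA v hv M hM2 ⟨i, hiM, by rw [← hi]; exact hui⟩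
  have hfu : FeasibleOn M u := ⟨hu.1, i, hiM, hui⟩
  have hagree : ∀ l ∈ M, u l = v l := by
    intro l hl
    rw [hMdef] at hl
    rcases Finset.mem_insert.1 hl with rfl | hl
    · exact hi
    · rw [Finset.mem_singleton.1 hl]; exact hj
  have hri := c.restrict M hM2 u v hfu hagree i hiM
  have hrj := c.restrict M hM2 u v hfu hagree j hjM
  rw [div_eq_div_iff hPu.ne' hPv.ne']
  have h1 := hLu i hiM
  have h2 := hLu j hjM
  have h3 := hLv i hiM
  have h4 := hLv j hjM
  rw [hsp] at h1 h2 h3 h4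
  rw [hri] at h1
  rw [hrj] at h2
  have hpi_pos : 0 < c.p M v i := by
    have hSu : 0 < c.P u i + c.P u j := by
      have := aux_P_nonneg hN c hu j; linarith
    nlinarith [h1]
  have key_u : c.P u j * c.p M v i = c.P u i * c.p M v j := by
    linear_combination c.p M v i * h2 - c.p M v j * h1
  have key_v : c.P v j * c.p M v i = c.P v i * c.p M v j := by
    linear_combination c.p M v i * h4 - c.p M v j * h3
  apply mul_right_cancel₀ hpi_pos.ne'
  linear_combination c.P v i * key_u - c.P u i * key_v

end Aux15c

section Aux15d
set_option linter.unusedSectionVars false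
set_option maxHeartbeats 1000000
variable {N : Type*} [Fintype N] [DecidableEq N]

private lemma aux_case2 (hN : 3 ≤ Fintype.card N) (c : CSF N) (hSM : c.SM) (hLCA : c.LCA)
    {x : N → ℝ} (hx : Feasible x) (i : N) (h0 : ∀ k, k ≠ i → x k = 0)
    {xi' : ℝ} (hlt : x i < xi') (j : N) (hj : j ≠ i) :
    c.P (Function.update x i xi') j ≤ c.P x j ∧
      (c.P (Function.update x i xi') j = c.P x j → c.P x j = 0) := by
  have hxi0 : x i ≠ 0 := by
    obtain ⟨l, hl⟩ := hx.2
    rcases eq_or_ne l i with rfl | h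
    · exact hl
    · exact absurd (h0 l h) hl
  have hxi : 0 < x i := lt_of_le_of_ne (hx.1 i) (Ne.symm hxi0)
  have hxi' : 0 < xi' := hxi.trans hlt
  set x' := Function.update x i xi' with hx'def
  have hx' : Feasible x' := aux_feas_update hx.1 i hxi'
  have hx'i : x' i = xi' := Function.update_self i xi' x
  obtain ⟨m0, hm0e, m1, hm1e, hm01⟩ := Finset.one_lt_card.1
    (show 1 < (Finset.univ.erase i).card by
      rw [Finset.card_erase_of_mem (Finset.mem_univ i), Finset.card_univ]; omega)
  have hm0i : m0 ≠ i := (Finset.mem_erase.1 hm0e).1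
  have hm1i : m1 ≠ i := (Finset.mem_erase.1 hm1e).1
  set v0 := Function.update x m0 1 with hv0def
  set v1 := Function.update x m1 1 with hv1def
  set v3 := Function.update v0 m1 1 with hv3def
  have hv0 : Feasible v0 := aux_feas_update hx.1 m0 one_pos
  have hv1 : Feasible v1 := aux_feas_update hx.1 m1 one_pos
  have hv3 : Feasible v3 := aux_feas_update hv0.1 m1 one_pos
  have hv0i : v0 i = x i := upd_ne (Ne.symm hm0i) 1
  have hv1i : v1 i = x i := upd_ne (Ne.symm hm1i) 1
  have hv3i : v3 i = x i := by rw [hv3def, upd_ne (Ne.symm hm1i) 1, hv0i]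
  have hv0m0 : v0 m0 = 1 := Function.update_self m0 1 x
  have hv1m1 : v1 m1 = 1 := Function.update_self m1 1 x
  have hv3m1 : v3 m1 = 1 := Function.update_self m1 1 v0
  have hv3m0 : v3 m0 = 1 := by rw [hv3def, upd_ne hm01 1, hv0m0]
  have hv1m0 : v1 m0 = x m0 := upd_ne hm01 1
  -- scaling lemma applied to v0, v1, v3
  obtain ⟨k0, hk0n, hk0l, hS0, hsc0⟩ := aux_scale hN c hSM hLCA hv0 i (k := m0) hm0i
    (by rw [hv0m0]; norm_num) (xi' := xi') (by rw [hv0i]; exact hlt)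
  obtain ⟨k1, hk1n, hk1l, hS1, hsc1⟩ := aux_scale hN c hSM hLCA hv1 i (k := m1) hm1i
    (by rw [hv1m1]; norm_num) (xi' := xi') (by rw [hv1i]; exact hlt)
  obtain ⟨k3, hk3n, hk3l, hS3, hsc3⟩ := aux_scale hN c hSM hLCA hv3 i (k := m1) hm1i
    (by rw [hv3m1]; norm_num) (xi' := xi') (by rw [hv3i]; exact hlt)
  set v0' := Function.update v0 i xi' with hv0'def
  set v1' := Function.update v1 i xi' with hv1'def
  set v3' := Function.update v3 i xi' with hv3'def
  have hv0' : Feasible v0' := aux_feas_update hv0.1 i hxi'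
  have hv1' : Feasible v1' := aux_feas_update hv1.1 i hxi'
  have hv3' : Feasible v3' := aux_feas_update hv3.1 i hxi'
  have hv0'i : v0' i = xi' := Function.update_self i xi' v0
  have hv1'i : v1' i = xi' := Function.update_self i xi' v1
  have hv3'i : v3' i = xi' := Function.update_self i xi' v3
  have hv0'm0 : v0' m0 = 1 := by rw [hv0'def, upd_ne hm0i xi', hv0m0]
  have hv3'm0 : v3' m0 = 1 := by rw [hv3'def, upd_ne hm0i xi', hv3m0]
  have hv1'm1 : v1' m1 = 1 := by rw [hv1'def, upd_ne hm1i xi', hv1m1]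
  have hv3'm1 : v3' m1 = 1 := by rw [hv3'def, upd_ne hm1i xi', hv3m1]
  -- positivity
  have hPxi : 0 < c.P x i := aux_posP hN c hSM hLCA x hx i hxi
  have hPx'i : 0 < c.P x' i := aux_posP hN c hSM hLCA x' hx' i (by rw [hx'i]; exact hxi')
  have hPv0i : 0 < c.P v0 i := aux_posP hN c hSM hLCA v0 hv0 i (by rw [hv0i]; exact hxi)
  have hPv1i : 0 < c.P v1 i := aux_posP hN c hSM hLCA v1 hv1 i (by rw [hv1i]; exact hxi)
  have hPv3i : 0 < c.P v3 i := aux_posP hN c hSM hLCA v3 hv3 i (by rw [hv3i]; exact hxi)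
  have hPv0'i : 0 < c.P v0' i := aux_posP hN c hSM hLCA v0' hv0' i (by rw [hv0'i]; exact hxi')
  have hPv1'i : 0 < c.P v1' i := aux_posP hN c hSM hLCA v1' hv1' i (by rw [hv1'i]; exact hxi')
  have hPv3'i : 0 < c.P v3' i := aux_posP hN c hSM hLCA v3' hv3' i (by rw [hv3'i]; exact hxi')
  have hPv3m0 : 0 < c.P v3 m0 := aux_posP hN c hSM hLCA v3 hv3 m0 (by rw [hv3m0]; norm_num)
  have hPv3m1 : 0 < c.P v3 m1 := aux_posP hN c hSM hLCA v3 hv3 m1 (by rw [hv3m1]; norm_num)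
  -- lambda factors
  set L0 : ℝ := k0 * c.P v0 i / c.P v0' i with hL0def
  set L1 : ℝ := k1 * c.P v1 i / c.P v1' i with hL1def
  set L3 : ℝ := k3 * c.P v3 i / c.P v3' i with hL3def
  have hr0 : ∀ l, l ≠ i → c.P v0' l / c.P v0' i = L0 * (c.P v0 l / c.P v0 i) := by
    intro l hl
    rw [hsc0 l hl, hL0def]
    field_simp
  have hr1 : ∀ l, l ≠ i → c.P v1' l / c.P v1' i = L1 * (c.P v1 l / c.P v1 i) := by
    intro l hl
    rw [hsc1 l hl, hL1def]
    field_simp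
  have hr3 : ∀ l, l ≠ i → c.P v3' l / c.P v3' i = L3 * (c.P v3 l / c.P v3 i) := by
    intro l hl
    rw [hsc3 l hl, hL3def]
    field_simp
  -- L0 = L3 via coordinate m0
  have hL03 : L0 = L3 := by
    have e1 : c.P v0 m0 / c.P v0 i = c.P v3 m0 / c.P v3 i :=
      aux_ratio hN c hLCA hv0 hv3 (Ne.symm hm0i) (by rw [hv0i, hv3i])
        (by rw [hv0m0, hv3m0]) (by rw [hv0i]; exact hxi0) hPv0i hPv3i
    have e2 : c.P v0' m0 / c.P v0' i = c.P v3' m0 / c.P v3' i :=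
      aux_ratio hN c hLCA hv0' hv3' (Ne.symm hm0i) (by rw [hv0'i, hv3'i])
        (by rw [hv0'm0, hv3'm0]) (by rw [hv0'i]; exact hxi'.ne') hPv0'i hPv3'i
    have f0 := hr0 m0 hm0i
    have f3 := hr3 m0 hm0i
    have hrpos : 0 < c.P v3 m0 / c.P v3 i := div_pos hPv3m0 hPv3i
    have hq : L0 * (c.P v3 m0 / c.P v3 i) = L3 * (c.P v3 m0 / c.P v3 i) := by
      rw [← e1, ← f0, e2, f3, e1]
    exact mul_right_cancel₀ hrpos.ne' hq
  have hL13 : L1 = L3 := by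
    have e1 : c.P v1 m1 / c.P v1 i = c.P v3 m1 / c.P v3 i :=
      aux_ratio hN c hLCA hv1 hv3 (Ne.symm hm1i) (by rw [hv1i, hv3i])
        (by rw [hv1m1, hv3m1]) (by rw [hv1i]; exact hxi0) hPv1i hPv3i
    have e2 : c.P v1' m1 / c.P v1' i = c.P v3' m1 / c.P v3' i :=
      aux_ratio hN c hLCA hv1' hv3' (Ne.symm hm1i) (by rw [hv1'i, hv3'i])
        (by rw [hv1'm1, hv3'm1]) (by rw [hv1'i]; exact hxi'.ne') hPv1'i hPv3'i
    have f1 := hr1 m1 hm1i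
    have f3 := hr3 m1 hm1i
    have hrpos : 0 < c.P v3 m1 / c.P v3 i := div_pos hPv3m1 hPv3i
    have hq : L1 * (c.P v3 m1 / c.P v3 i) = L3 * (c.P v3 m1 / c.P v3 i) := by
      rw [← e1, ← f1, e2, f3, e1]
    exact mul_right_cancel₀ hrpos.ne' hq
  -- the key transfer to x itself
  have hkey : ∀ l, l ≠ i → c.P x' l / c.P x' i = L0 * (c.P x l / c.P x i) := by
    intro l hl
    have hx'l : x' l = x l := upd_ne hl xi'
    by_cases hlm : l = m0
    · subst hlm
      have hv1'l : v1' l = x l := by rw [hv1'def, upd_ne hm0i xi', hv1m0]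
      have g1 : c.P x l / c.P x i = c.P v1 l / c.P v1 i :=
        aux_ratio hN c hLCA hx hv1 (Ne.symm hl) hv1i.symm hv1m0.symm hxi0 hPxi hPv1i
      have g2 : c.P x' l / c.P x' i = c.P v1' l / c.P v1' i :=
        aux_ratio hN c hLCA hx' hv1' (Ne.symm hl) (by rw [hx'i, hv1'i])
          (by rw [hx'l, hv1'l]) (by rw [hx'i]; exact hxi'.ne') hPx'i hPv1'i
      rw [g2, hr1 l hl, hL13, ← hL03, g1]
    · have hv0l : v0 l = x l := upd_ne hlm 1
      have hv0'l : v0' l = x l := by rw [hv0'def, upd_ne hl xi', hv0l]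
      have g1 : c.P x l / c.P x i = c.P v0 l / c.P v0 i :=
        aux_ratio hN c hLCA hx hv0 (Ne.symm hl) hv0i.symm hv0l.symm hxi0 hPxi hPv0i
      have g2 : c.P x' l / c.P x' i = c.P v0' l / c.P v0' i :=
        aux_ratio hN c hLCA hx' hv0' (Ne.symm hl) (by rw [hx'i, hv0'i])
          (by rw [hx'l, hv0'l]) (by rw [hx'i]; exact hxi'.ne') hPx'i hPv0'i
      rw [g2, hr0 l hl, g1]
  -- bounds on L0
  have hL0nonneg : 0 ≤ L0 := by
    rw [hL0def]
    exact div_nonneg (mul_nonneg hk0n hPv0i.le) hPv0'i.le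
  have hL0lt : L0 < 1 := by
    rw [hL0def, mul_div_assoc]
    have hd0 : c.P v0 i / c.P v0' i < 1 := (div_lt_one hPv0'i).2 hS0
    calc k0 * (c.P v0 i / c.P v0' i) ≤ k0 * 1 := mul_le_mul_of_nonneg_left hd0.le hk0n
      _ = k0 := mul_one _
      _ < 1 := hk0l
  -- sum identity
  have hT : (1 - c.P x' i) / c.P x' i = L0 * ((1 - c.P x i) / c.P x i) := by
    rw [← aux_sum_erase hN c hx' i, ← aux_sum_erase hN c hx i,
      Finset.sum_div, Finset.sum_div, Finset.mul_sum]
    exact Finset.sum_congr rfl (fun l hl => hkey l (Finset.mem_erase.1 hl).1)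
  have hT2 : (1 - c.P x' i) * c.P x i = L0 * (1 - c.P x i) * c.P x' i := by
    rw [← mul_div_assoc] at hT
    exact (div_eq_div_iff hPx'i.ne' hPxi.ne').1 hT
  have hfactor : L0 * c.P x' i < c.P x i := by
    have hident : c.P x i - L0 * c.P x' i = c.P x i * c.P x' i * (1 - L0) := by
      linear_combination hT2
    have hpos : 0 < c.P x i * c.P x' i * (1 - L0) :=
      mul_pos (mul_pos hPxi hPx'i) (by linarith)
    linarith
  have hratio : L0 * c.P x' i / c.P x i < 1 := (div_lt_one hPxi).2 hfactor
  have hPxj := aux_P_nonneg hN c hx j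
  have hkj := hkey j hj
  have hxj' : c.P x' j = L0 * (c.P x j / c.P x i) * c.P x' i := (div_eq_iff hPx'i.ne').1 hkj
  have hre : L0 * (c.P x j / c.P x i) * c.P x' i = c.P x j * (L0 * c.P x' i / c.P x i) := by
    ring
  constructor
  · rw [hxj', hre]
    calc c.P x j * (L0 * c.P x' i / c.P x i) ≤ c.P x j * 1 :=
          mul_le_mul_of_nonneg_left hratio.le hPxj
      _ = c.P x j := mul_one _
  · intro he
    by_contra hne
    have hPjpos : 0 < c.P x j := lt_of_le_of_ne hPxj (Ne.symm hne)
    have h2 : c.P x j * (L0 * c.P x' i / c.P x i) = c.P x j := by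
      rw [← hre, ← hxj']; exact he
    have h3 : c.P x j * (L0 * c.P x' i / c.P x i) < c.P x j * 1 :=
      mul_lt_mul_of_pos_left hratio hPjpos
    rw [mul_one] at h3
    linarith

end Aux15d


/-- under SM and LCA, a contestant's allocation is weakly decreasing in
opponents' efforts, with equality only at a zero allocation (which requires zero
effort). -/
theorem statement15 {N : Type*} [Fintype N] [DecidableEq N]
    (hN : 3 ≤ Fintype.card N) (c : CSF N) (hSM : c.SM) (hLCA : c.LCA) :
    ∀ x, Feasible x → ∀ i j : N, j ≠ i → ∀ xi' : ℝ, x i < xi' →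
      c.P (Function.update x i xi') j ≤ c.P x j ∧
      (c.P (Function.update x i xi') j = c.P x j → c.P x j = 0 ∧ x j = 0) := by
  intro x hx i j hji xi' hlt
  by_cases hdeg : ∀ k, k ≠ i → x k = 0
  · have h := aux_case2 hN c hSM hLCA hx i hdeg hlt j hji
    exact ⟨h.1, fun he => ⟨h.2 he, hdeg j hji⟩⟩
  · push_neg at hdeg
    obtain ⟨k, hki, hk⟩ := hdeg
    obtain ⟨κ, hκ0, hκ1, _, hsc⟩ := aux_scale hN c hSM hLCA hx i hki hk hlt
    have hPj := aux_P_nonneg hN c hx j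
    have h1 := hsc j hji
    have hxj0 : c.P x j = 0 → x j = 0 := by
      intro hPj0
      by_contra hxj
      have hpos : 0 < x j := lt_of_le_of_ne (hx.1 j) (Ne.symm hxj)
      have := aux_posP hN c hSM hLCA x hx j hpos
      linarith
    constructor
    · rw [h1]
      nlinarith [hPj, hκ1]
    · intro he
      rw [h1] at he
      have h2 : c.P x j * (1 - κ) = 0 := by linear_combination -he
      rcases mul_eq_zero.1 h2 with h3 | h3
      · exact ⟨h3, hxj0 h3⟩
      · exfalso; linarith
end

section
/- A contest success function on N satisfies strict monotonicity (SM), Luce's choice axiom (LCA), anonymity (ANY), split-proofness (SP), and collusion-proofness (CP) if and only if it is the ratio CSF: for every subset M ⊆ N with |M| ≥ 2, every i ∈ M, and every effort vector x^M ∈ ℝ_+^M \ {0}, p_i^M(x^M) = x_i / Σ_{j∈M} x_j. -/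
open Finset

set_option linter.unusedSectionVars false

namespace S18
open CSF

structure Nice {N : Type*} [Fintype N] [DecidableEq N] (c : CSF N) : Prop where
  sm : c.SM
  lca : c.LCA
  any : c.ANY
  sp : c.SP
  cp : c.CP

set_option linter.unusedSectionVars false

variable {N : Type*} [Fintype N] [DecidableEq N]

lemma feasible_of_on {M : Finset N} {x : N → ℝ} (h : FeasibleOn M x) : Feasible x :=
  ⟨h.1, h.2.imp fun _ hi => hi.2⟩

lemma feasibleOn_univ {x : N → ℝ} (h : Feasible x) : FeasibleOn univ x :=
  ⟨h.1, h.2.imp fun i hi => ⟨mem_univ i, hi⟩⟩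

variable (hN : 3 ≤ Fintype.card N) {c : CSF N}
include hN

lemma card_univ2 : 2 ≤ (univ : Finset N).card := by rw [card_univ]; omega

lemma card_erase2 (j : N) : 2 ≤ ((univ : Finset N).erase j).card := by
  rw [Finset.card_erase_of_mem (mem_univ j), card_univ]; omega

lemma sum_P {x : N → ℝ} (hx : Feasible x) : ∑ i, c.P x i = 1 :=
  c.sum_eq_one univ (card_univ2 hN) x (feasibleOn_univ hx)

lemma ME (hg : Nice c) {x : N → ℝ} (hx : Feasible x) {i j : N} (hij : i ≠ j) :
    c.P x i + c.P x j = c.p (univ.erase j) (Function.update x i (x i + x j)) i :=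
  le_antisymm (hg.sp x hx i j hij) (hg.cp x hx i j hij)

lemma Z (hg : Nice c) {x : N → ℝ} (hx : Feasible x) {j : N} (hj : x j = 0) :
    c.P x j = 0 := by
  have hME : ∀ i ∈ univ.erase j, c.P x i + c.P x j = c.p (univ.erase j) x i := by
    intro i hi
    have hij : i ≠ j := (Finset.mem_erase.mp hi).1
    have h := ME hN hg hx hij
    rwa [hj, add_zero, Function.update_eq_self] at h
  have hfeasM : FeasibleOn (univ.erase j) x := by
    obtain ⟨k, hk⟩ := hx.2
    exact ⟨hx.1, k, Finset.mem_erase.mpr ⟨fun h => hk (h ▸ hj), mem_univ k⟩, hk⟩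
  have hsum : ∑ i ∈ univ.erase j, (c.P x i + c.P x j) = 1 := by
    rw [Finset.sum_congr rfl hME]
    exact c.sum_eq_one _ (card_erase2 hN j) x hfeasM
  rw [Finset.sum_add_distrib, Finset.sum_const, nsmul_eq_mul] at hsum
  have h1 : ∑ i ∈ univ.erase j, c.P x i + c.P x j = 1 := by
    rw [Finset.sum_erase_add _ _ (mem_univ j)]; exact sum_P (c := c) hN hx
  have hc : (2 : ℝ) ≤ ((univ.erase j).card : ℝ) := by exact_mod_cast card_erase2 hN j
  have h2 : (((univ.erase j).card : ℝ) - 1) * c.P x j = 0 := by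
    have := hsum; have := h1; nlinarith [hsum, h1]
  rcases mul_eq_zero.mp h2 with h | h
  · linarith
  · exact h

lemma Pos (hg : Nice c) {x : N → ℝ} (hx : Feasible x) {k : N} (hk : 0 < x k) :
    0 < c.P x k := by
  by_cases hall : ∀ m, m ≠ k → x m = 0
  · have h1 : ∑ i, c.P x i = 1 := sum_P (c := c) hN hx
    rw [← Finset.add_sum_erase _ _ (mem_univ k)] at h1
    have h0 : ∑ i ∈ univ.erase k, c.P x i = 0 := by
      apply Finset.sum_eq_zero
      intro m hm
      exact Z hN hg hx (hall m (Finset.mem_erase.mp hm).1)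
    rw [h0, add_zero] at h1; rw [h1]; norm_num
  · push_neg at hall
    obtain ⟨m, hmk, hm0⟩ := hall
    have hyf : Feasible (Function.update x k 0) := by
      refine ⟨fun i => ?_, ⟨m, by rw [Function.update_of_ne hmk]; exact hm0⟩⟩
      rw [Function.update_apply]; split
      · exact le_refl 0
      · exact hx.1 i
    have h0 : c.P (Function.update x k 0) k = 0 :=
      Z hN hg hyf (Function.update_self k 0 x)
    have hmono := hg.sm _ hyf k (by rw [h0]; norm_num) (x k)
      (by rw [Function.update_self]; exact hk)
    rw [h0] at hmono
    rwa [Function.update_idem, Function.update_eq_self] at hmono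

lemma star (hg : Nice c) {x : N → ℝ} (hx : Feasible x) {i j : N} (hij : i ≠ j)
    (hpos : 0 < x i + x j) :
    c.P x i + c.P x j
      = c.P (Function.update (Function.update x i (x i + x j)) j 0) i := by
  set y := Function.update x i (x i + x j) with hy
  set z := Function.update y j 0 with hz
  have hynn : ∀ m, 0 ≤ y m := fun m => by
    rw [hy, Function.update_apply]; split
    · exact add_nonneg (hx.1 i) (hx.1 j)
    · exact hx.1 m
  have hyi : y i = x i + x j := Function.update_self i _ x
  have hzi : z i = x i + x j := by rw [hz, Function.update_of_ne hij, hyi]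
  have hzj : z j = 0 := Function.update_self j 0 y
  have hznn : ∀ m, 0 ≤ z m := fun m => by
    rw [hz, Function.update_apply]; split
    · exact le_refl 0
    · exact hynn m
  have hiM : i ∈ univ.erase j := Finset.mem_erase.mpr ⟨hij, mem_univ i⟩
  have hrest : c.p (univ.erase j) y i = c.p (univ.erase j) z i :=
    c.restrict _ (card_erase2 hN j) y z
      ⟨hynn, i, hiM, by rw [hyi]; exact ne_of_gt hpos⟩
      (fun m hm => (Function.update_of_ne (Finset.mem_erase.mp hm).1 0 y).symm) i hiM
  have hzf : Feasible z := ⟨hznn, i, by rw [hzi]; exact ne_of_gt hpos⟩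
  have hlz := hg.lca z hzf (univ.erase j) (card_erase2 hN j)
    ⟨i, hiM, by rw [hzi]; exact ne_of_gt hpos⟩ i hiM
  have hsz : ∑ k ∈ univ.erase j, c.P z k = 1 := by
    have hs := sum_P (c := c) hN hzf
    have hzj0 : c.P z j = 0 := Z hN hg hzf hzj
    rw [← Finset.sum_erase_add _ _ (mem_univ j), hzj0, add_zero] at hs
    exact hs
  rw [hsz, mul_one] at hlz
  rw [ME hN hg hx hij, hrest, ← hlz]


omit hN

def bvec (i j : N) (a b : ℝ) : N → ℝ := fun k => if k = i then a else if k = j then b else 0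

lemma bvec_i {i j : N} (a b : ℝ) : bvec i j a b i = a := by simp [bvec]

lemma bvec_j {i j : N} (hij : i ≠ j) (a b : ℝ) : bvec i j a b j = b := by
  simp [bvec, hij.symm]

lemma bvec_other {i j k : N} (hki : k ≠ i) (hkj : k ≠ j) (a b : ℝ) :
    bvec i j a b k = 0 := by simp [bvec, hki, hkj]

lemma bvec_swap {i j : N} (hij : i ≠ j) (a b : ℝ) : bvec i j a b = bvec j i b a := by
  funext k
  rcases eq_or_ne k i with rfl | h1
  · simp [bvec, hij]
  · rcases eq_or_ne k j with rfl | h2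
    · simp [bvec, hij.symm]
    · simp [bvec, h1, h2]

lemma bvec_feas {i j : N} (hij : i ≠ j) {a b : ℝ} (ha : 0 < a) (hb : 0 ≤ b) :
    Feasible (bvec i j a b) := by
  refine ⟨fun k => ?_, ⟨i, by rw [bvec_i]; exact ha.ne'⟩⟩
  unfold bvec; split_ifs
  · exact ha.le
  · exact hb
  · exact le_refl 0

lemma exists_perm_pair {i j i' j' : N} (hij : i ≠ j) (hij' : i' ≠ j') :
    ∃ π : Equiv.Perm N, π i = i' ∧ π j = j' := by
  set σ := Equiv.swap i i' with hσ
  refine ⟨σ.trans (Equiv.swap (σ j) j'), ?_, ?_⟩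
  · have h1 : σ i = i' := Equiv.swap_apply_left i i'
    have h2 : i' ≠ σ j := by
      rw [← h1]; exact fun h => hij (σ.injective h)
    simp only [Equiv.trans_apply, h1]
    exact Equiv.swap_apply_of_ne_of_ne h2 hij'
  · simp only [Equiv.trans_apply]
    exact Equiv.swap_apply_left _ _

lemma P_bvec_eq {c : CSF N} (hany : c.ANY) {i j i' j' : N} (hij : i ≠ j) (hij' : i' ≠ j')
    {a b : ℝ} (hfeas : Feasible (bvec i j a b)) :
    c.P (bvec i' j' a b) i' = c.P (bvec i j a b) i := by
  obtain ⟨π, hπi, hπj⟩ := exists_perm_pair hij hij'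
  have h := hany π (bvec i j a b) hfeas i
  have heq : (fun k => bvec i j a b (π.symm k)) = bvec i' j' a b := by
    funext k
    simp only [bvec, Equiv.symm_apply_eq, hπi, hπj]
  rw [heq, hπi] at h
  exact h

noncomputable def hp (c : CSF N) (i₀ j₀ : N) (a b : ℝ) : ℝ := c.P (bvec i₀ j₀ a b) i₀

variable {c : CSF N} {i₀ j₀ : N}

include hN

lemma hp_pos (hg : Nice c) (h₀ : i₀ ≠ j₀) {a b : ℝ} (ha : 0 < a) (hb : 0 ≤ b) :
    0 < hp c i₀ j₀ a b :=
  Pos hN hg (bvec_feas h₀ ha hb) (by rw [bvec_i]; exact ha)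

lemma sum_P_pair (hg : Nice c) {z : N → ℝ} (hz : Feasible z) {i j : N} (hij : i ≠ j)
    (h0 : ∀ k, k ≠ i → k ≠ j → z k = 0) : c.P z i + c.P z j = 1 := by
  have h := sum_P (c := c) hN hz
  rw [← Finset.sum_subset (Finset.subset_univ ({i, j} : Finset N))] at h
  · rwa [Finset.sum_pair hij] at h
  · intro k _ hk
    simp only [Finset.mem_insert, Finset.mem_singleton] at hk
    push_neg at hk
    exact Z hN hg hz (h0 k hk.1 hk.2)

lemma P_bvec_pair_i (hg : Nice c) (h₀ : i₀ ≠ j₀) {i j : N} (hij : i ≠ j)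
    {a b : ℝ} (ha : 0 < a) (hb : 0 < b) :
    c.P (bvec i j a b) i = hp c i₀ j₀ a b :=
  P_bvec_eq hg.any h₀ hij (bvec_feas h₀ ha hb.le)

lemma P_bvec_pair_j (hg : Nice c) (h₀ : i₀ ≠ j₀) {i j : N} (hij : i ≠ j)
    {a b : ℝ} (ha : 0 < a) (hb : 0 < b) :
    c.P (bvec i j a b) j = hp c i₀ j₀ b a := by
  rw [bvec_swap hij]
  exact P_bvec_pair_i hN hg h₀ hij.symm hb ha

lemma hp_addone (hg : Nice c) (h₀ : i₀ ≠ j₀) {a b : ℝ} (ha : 0 < a) (hb : 0 < b) :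
    hp c i₀ j₀ a b + hp c i₀ j₀ b a = 1 := by
  have h := sum_P_pair hN hg (bvec_feas h₀ ha hb.le) h₀
    (fun k hk1 hk2 => bvec_other hk1 hk2 a b)
  rwa [show c.P (bvec i₀ j₀ a b) j₀ = hp c i₀ j₀ b a from
    P_bvec_pair_j hN hg h₀ h₀ ha hb] at h

lemma pair_p (hg : Nice c) (h₀ : i₀ ≠ j₀) {x : N → ℝ} (hx : Feasible x) {i j : N}
    (hij : i ≠ j) (hxi : 0 < x i) (hxj : 0 < x j) :
    c.p {i, j} x i = hp c i₀ j₀ (x i) (x j) := by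
  set z := bvec i j (x i) (x j) with hzdef
  have hzf : Feasible z := bvec_feas hij hxi hxj.le
  have hcard : ({i, j} : Finset N).card = 2 := Finset.card_pair hij
  have hiM : i ∈ ({i, j} : Finset N) := Finset.mem_insert_self i _
  have hrest : c.p {i, j} x i = c.p {i, j} z i := by
    apply c.restrict _ hcard.ge x z ⟨hx.1, i, hiM, hxi.ne'⟩ _ i hiM
    intro m hm
    rcases Finset.mem_insert.mp hm with rfl | hm
    · rw [hzdef, bvec_i]
    · rw [Finset.mem_singleton.mp hm, hzdef, bvec_j hij]
  have hsum : c.P z i + c.P z j = 1 := sum_P_pair hN hg hzf hij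
    (fun k hk1 hk2 => bvec_other hk1 hk2 _ _)
  have hlz := hg.lca z hzf {i, j} hcard.ge
    ⟨i, hiM, by rw [hzdef, bvec_i]; exact hxi.ne'⟩ i hiM
  rw [Finset.sum_pair hij, hsum, mul_one] at hlz
  rw [hrest, ← hlz, hzdef]
  exact P_bvec_pair_i hN hg h₀ hij hxi hxj

lemma key_ratio (hg : Nice c) (h₀ : i₀ ≠ j₀) {x : N → ℝ} (hx : Feasible x) {i j : N}
    (hij : i ≠ j) (hxi : 0 < x i) (hxj : 0 < x j) :
    c.P x i * hp c i₀ j₀ (x j) (x i) = c.P x j * hp c i₀ j₀ (x i) (x j) := by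
  have hcard : ({i, j} : Finset N).card = 2 := Finset.card_pair hij
  have hiM : i ∈ ({i, j} : Finset N) := Finset.mem_insert_self i _
  have hjM : j ∈ ({i, j} : Finset N) := Finset.mem_insert_of_mem (Finset.mem_singleton_self j)
  have hwit : ∃ m ∈ ({i, j} : Finset N), x m ≠ 0 := ⟨i, hiM, hxi.ne'⟩
  have hli := hg.lca x hx {i, j} hcard.ge hwit i hiM
  have hlj := hg.lca x hx {i, j} hcard.ge hwit j hjM
  have hpi : c.p {i, j} x i = hp c i₀ j₀ (x i) (x j) := pair_p hN hg h₀ hx hij hxi hxj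
  have hpj : c.p {i, j} x j = hp c i₀ j₀ (x j) (x i) := by
    rw [Finset.pair_comm i j]
    exact pair_p hN hg h₀ hx hij.symm hxj hxi
  rw [← hpi, ← hpj, hli, hlj]
  ring


lemma hp_lt_one (hg : Nice c) (h₀ : i₀ ≠ j₀) {a b : ℝ} (ha : 0 < a) (hb : 0 < b) :
    hp c i₀ j₀ a b < 1 := by
  have h1 := hp_addone hN hg h₀ ha hb
  have h2 := hp_pos hN hg h₀ hb ha.le
  linarith

lemma hp_mono (hg : Nice c) (h₀ : i₀ ≠ j₀) {a a' b : ℝ} (ha : 0 < a) (haa : a < a')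
    (hb : 0 < b) : hp c i₀ j₀ a b < hp c i₀ j₀ a' b := by
  have hupd : Function.update (bvec i₀ j₀ a b) i₀ a' = bvec i₀ j₀ a' b := by
    funext m
    rcases eq_or_ne m i₀ with rfl | hm
    · rw [Function.update_self, bvec_i]
    · rw [Function.update_of_ne hm]
      unfold bvec; rw [if_neg hm, if_neg hm]
  have h := hg.sm (bvec i₀ j₀ a b) (bvec_feas h₀ ha hb.le) i₀
    (hp_lt_one hN hg h₀ ha hb) a' (by rw [bvec_i]; exact haa)
  rw [hupd] at h
  exact h

noncomputable def gf (c : CSF N) (i₀ j₀ : N) (a : ℝ) : ℝ :=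
  hp c i₀ j₀ a 1 / hp c i₀ j₀ 1 a

lemma gf_pos (hg : Nice c) (h₀ : i₀ ≠ j₀) {a : ℝ} (ha : 0 < a) : 0 < gf c i₀ j₀ a :=
  div_pos (hp_pos hN hg h₀ ha one_pos.le) (hp_pos hN hg h₀ one_pos ha.le)

lemma gf_one (hg : Nice c) (h₀ : i₀ ≠ j₀) : gf c i₀ j₀ 1 = 1 :=
  div_self (hp_pos hN hg h₀ one_pos one_pos.le).ne'

lemma gf_mono (hg : Nice c) (h₀ : i₀ ≠ j₀) {a a' : ℝ} (ha : 0 < a) (haa : a < a') :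
    gf c i₀ j₀ a < gf c i₀ j₀ a' := by
  have ha' : 0 < a' := ha.trans haa
  have hA : hp c i₀ j₀ a 1 < hp c i₀ j₀ a' 1 := hp_mono hN hg h₀ ha haa one_pos
  have hApos : 0 < hp c i₀ j₀ a 1 := hp_pos hN hg h₀ ha one_pos.le
  have hBpos : 0 < hp c i₀ j₀ 1 a := hp_pos hN hg h₀ one_pos ha.le
  have hB'pos : 0 < hp c i₀ j₀ 1 a' := hp_pos hN hg h₀ one_pos ha'.le
  have hB : hp c i₀ j₀ 1 a' < hp c i₀ j₀ 1 a := by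
    have e1 := hp_addone hN hg h₀ ha one_pos
    have e2 := hp_addone hN hg h₀ ha' one_pos
    linarith
  unfold gf
  rw [div_lt_div_iff₀ hBpos hB'pos]
  nlinarith

variable {k₀ : N}

def tvec (i j k : N) (a b e : ℝ) : N → ℝ :=
  fun m => if m = i then a else if m = j then b else if m = k then e else 0

omit hN in
lemma tvec_feas {i j k : N} {a b e : ℝ} (ha : 0 < a) (hb : 0 ≤ b) (he : 0 ≤ e) :
    Feasible (tvec i j k a b e) := by
  refine ⟨fun m => ?_, ⟨i, by simp [tvec, ha.ne']⟩⟩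
  unfold tvec; split_ifs
  · exact ha.le
  · exact hb
  · exact he
  · exact le_refl 0

section Triple
variable (h₀ : i₀ ≠ j₀) (h₁ : i₀ ≠ k₀) (h₂ : j₀ ≠ k₀)
include h₀ h₁ h₂

lemma sum_P_three (hg : Nice c) {z : N → ℝ} (hz : Feasible z)
    (h0 : ∀ m, m ≠ i₀ → m ≠ j₀ → m ≠ k₀ → z m = 0) :
    c.P z i₀ + c.P z j₀ + c.P z k₀ = 1 := by
  have h := sum_P (c := c) hN hz
  rw [← Finset.sum_subset (Finset.subset_univ ({i₀, j₀, k₀} : Finset N))] at h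
  · rw [Finset.sum_insert (by simp [h₀, h₁]), Finset.sum_pair h₂] at h
    linarith
  · intro m _ hm
    simp only [Finset.mem_insert, Finset.mem_singleton] at hm
    push_neg at hm
    exact Z hN hg hz (h0 m hm.1 hm.2.1 hm.2.2)

lemma dagger (hg : Nice c) {a b : ℝ} (ha : 0 < a) (hb : 0 < b) :
    hp c i₀ j₀ a 1 * hp c i₀ j₀ b a * hp c i₀ j₀ 1 b
      = hp c i₀ j₀ b 1 * hp c i₀ j₀ a b * hp c i₀ j₀ 1 a := by
  set w := tvec i₀ j₀ k₀ a b 1 with hw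
  have hwi : w i₀ = a := by simp [hw, tvec]
  have hwj : w j₀ = b := by simp [hw, tvec, h₀.symm]
  have hwk : w k₀ = 1 := by simp [hw, tvec, h₁.symm, h₂.symm]
  have hwf : Feasible w := tvec_feas ha hb.le one_pos.le
  have hPk : 0 < c.P w k₀ := Pos hN hg hwf (by rw [hwk]; exact one_pos)
  have f1 := key_ratio hN hg h₀ hwf h₁ (by rw [hwi]; exact ha) (by rw [hwk]; exact one_pos)
  have f2 := key_ratio hN hg h₀ hwf h₂ (by rw [hwj]; exact hb) (by rw [hwk]; exact one_pos)
  have f3 := key_ratio hN hg h₀ hwf h₀ (by rw [hwi]; exact ha) (by rw [hwj]; exact hb)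
  rw [hwi, hwk] at f1
  rw [hwj, hwk] at f2
  rw [hwi, hwj] at f3
  have big : c.P w k₀ * (hp c i₀ j₀ a 1 * hp c i₀ j₀ b a * hp c i₀ j₀ 1 b)
      = c.P w k₀ * (hp c i₀ j₀ b 1 * hp c i₀ j₀ a b * hp c i₀ j₀ 1 a) := by
    linear_combination (-(hp c i₀ j₀ b a * hp c i₀ j₀ 1 b)) * f1
      + (hp c i₀ j₀ a b * hp c i₀ j₀ 1 a) * f2
      + (hp c i₀ j₀ 1 a * hp c i₀ j₀ 1 b) * f3
  exact mul_left_cancel₀ hPk.ne' big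

lemma gratio (hg : Nice c) {x : N → ℝ} (hx : Feasible x) {i j : N}
    (hij : i ≠ j) (hxi : 0 < x i) (hxj : 0 < x j) :
    c.P x i * gf c i₀ j₀ (x j) = c.P x j * gf c i₀ j₀ (x i) := by
  set a := x i
  set b := x j
  have e1 := key_ratio hN hg h₀ hx hij hxi hxj
  have e2 := dagger hN h₀ h₁ h₂ hg hxi hxj
  have h1a : 0 < hp c i₀ j₀ 1 a := hp_pos hN hg h₀ one_pos hxi.le
  have h1b : 0 < hp c i₀ j₀ 1 b := hp_pos hN hg h₀ one_pos hxj.le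
  have hba : 0 < hp c i₀ j₀ b a := hp_pos hN hg h₀ hxj hxi.le
  have hab : 0 < hp c i₀ j₀ a b := hp_pos hN hg h₀ hxi hxj.le
  unfold gf
  rw [mul_div_assoc', mul_div_assoc', div_eq_div_iff h1b.ne' h1a.ne']
  apply mul_right_cancel₀ hba.ne'
  linear_combination (hp c i₀ j₀ b 1 * hp c i₀ j₀ 1 a) * e1 - c.P x j * e2

lemma gf_add (hg : Nice c) {a b : ℝ} (ha : 0 < a) (hb : 0 < b) :
    gf c i₀ j₀ (a + b) = gf c i₀ j₀ a + gf c i₀ j₀ b := by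
  set w := tvec i₀ j₀ k₀ a b 1 with hw
  have hwi : w i₀ = a := by simp [hw, tvec]
  have hwj : w j₀ = b := by simp [hw, tvec, h₀.symm]
  have hwk : w k₀ = 1 := by simp [hw, tvec, h₁.symm, h₂.symm]
  have hwf : Feasible w := tvec_feas ha hb.le one_pos.le
  have hPk : 0 < c.P w k₀ := Pos hN hg hwf (by rw [hwk]; exact one_pos)
  have hg1 : gf c i₀ j₀ 1 = 1 := gf_one hN hg h₀
  have r1 := gratio hN h₀ h₁ h₂ hg hwf h₁ (by rw [hwi]; exact ha) (by rw [hwk]; exact one_pos)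
  have r2 := gratio hN h₀ h₁ h₂ hg hwf h₂ (by rw [hwj]; exact hb) (by rw [hwk]; exact one_pos)
  rw [hwi, hwk, hg1, mul_one] at r1
  rw [hwj, hwk, hg1, mul_one] at r2
  have hsum3 := sum_P_three hN h₀ h₁ h₂ hg hwf
    (fun m hm1 hm2 hm3 => by simp [hw, tvec, hm1, hm2, hm3])
  -- the merged vector
  have hstar := star hN hg hwf h₀ (by rw [hwi, hwj]; positivity)
  have hwupd : Function.update (Function.update w i₀ (w i₀ + w j₀)) j₀ 0
      = bvec i₀ k₀ (a + b) 1 := by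
    funext m
    rcases eq_or_ne m j₀ with rfl | hmj
    · rw [Function.update_self, bvec_other h₀.symm h₂]
    · rw [Function.update_of_ne hmj]
      rcases eq_or_ne m i₀ with rfl | hmi
      · rw [Function.update_self, hwi, hwj, bvec_i]
      · rw [Function.update_of_ne hmi]
        rcases eq_or_ne m k₀ with rfl | hmk
        · rw [hwk, bvec_j h₁]
        · rw [bvec_other hmi hmk]
          simp [hw, tvec, hmi, hmj, hmk]
  rw [hwupd] at hstar
  have hab2 : 0 < a + b := by positivity
  have hzf : Feasible (bvec i₀ k₀ (a + b) 1) := bvec_feas h₁ hab2 one_pos.le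
  have hPzk : 0 < c.P (bvec i₀ k₀ (a + b) 1) k₀ :=
    Pos hN hg hzf (by rw [bvec_j h₁]; exact one_pos)
  have r3 := gratio hN h₀ h₁ h₂ hg hzf h₁ (by rw [bvec_i]; exact hab2)
    (by rw [bvec_j h₁]; exact one_pos)
  rw [bvec_i, bvec_j h₁, hg1, mul_one] at r3
  have hsumz : c.P (bvec i₀ k₀ (a + b) 1) i₀ + c.P (bvec i₀ k₀ (a + b) 1) k₀ = 1 :=
    sum_P_pair hN hg hzf h₁ (fun m hm1 hm2 => bvec_other hm1 hm2 _ _)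
  have hts : c.P w k₀ = c.P (bvec i₀ k₀ (a + b) 1) k₀ := by linarith
  have hfin : c.P w k₀ * (gf c i₀ j₀ a + gf c i₀ j₀ b)
      = c.P w k₀ * gf c i₀ j₀ (a + b) := by
    rw [hts] at r1 r2
    rw [mul_add, hts]
    linarith
  exact (mul_left_cancel₀ hPk.ne' hfin).symm


lemma gf_nat' (hg : Nice c) : ∀ n : ℕ, 1 ≤ n → ∀ {a : ℝ}, 0 < a →
    gf c i₀ j₀ ((n : ℝ) * a) = (n : ℝ) * gf c i₀ j₀ a := by
  intro n hn
  induction n, hn using Nat.le_induction with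
  | base => intro a ha; rw [Nat.cast_one, one_mul, one_mul]
  | succ n hn ih =>
    intro a ha
    have h1 : ((n + 1 : ℕ) : ℝ) * a = (n : ℝ) * a + a := by push_cast; ring
    rw [h1, gf_add hN h₀ h₁ h₂ hg (by positivity) ha, ih ha]
    push_cast; ring

lemma gf_rat (hg : Nice c) {q : ℚ} (hq : 0 < q) : gf c i₀ j₀ (q : ℝ) = (q : ℝ) := by
  have hm : 0 < q.num := Rat.num_pos.mpr hq
  have hd : 1 ≤ q.den := q.pos
  have hm' : 1 ≤ q.num.toNat := by omega
  have hqR : (0 : ℝ) < (q : ℝ) := by exact_mod_cast hq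
  have hkey : ((q.den : ℝ)) * (q : ℝ) = (q.num.toNat : ℝ) := by
    rw [Rat.cast_def]
    have hden : (q.den : ℝ) ≠ 0 := by positivity
    field_simp
    exact_mod_cast (Int.toNat_of_nonneg hm.le).symm
  have h1 : gf c i₀ j₀ ((q.den : ℝ) * (q : ℝ)) = (q.den : ℝ) * gf c i₀ j₀ (q : ℝ) :=
    gf_nat' hN h₀ h₁ h₂ hg q.den hd hqR
  have h2 : gf c i₀ j₀ ((q.num.toNat : ℝ)) = (q.num.toNat : ℝ) := by
    have h := gf_nat' hN h₀ h₁ h₂ hg q.num.toNat hm' (a := 1) one_pos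
    rw [mul_one] at h
    rw [h, gf_one hN hg h₀, mul_one]
  have h3 : (q.den : ℝ) * gf c i₀ j₀ (q : ℝ) = (q.den : ℝ) * (q : ℝ) := by
    rw [← h1, hkey, h2]
  have hden : ((q.den : ℝ)) ≠ 0 := by positivity
  exact mul_left_cancel₀ hden h3

lemma gf_id (hg : Nice c) {a : ℝ} (ha : 0 < a) : gf c i₀ j₀ a = a := by
  rcases lt_trichotomy (gf c i₀ j₀ a) a with h | h | h
  · obtain ⟨q, hq1, hq2⟩ := exists_rat_btwn h
    have hq0 : 0 < q := by
      have : (0 : ℝ) < (q : ℝ) := (gf_pos hN hg h₀ ha).trans hq1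
      exact_mod_cast this
    have hmono := gf_mono hN hg h₀ (by exact_mod_cast hq0) hq2
    rw [gf_rat hN h₀ h₁ h₂ hg hq0] at hmono
    linarith
  · exact h
  · obtain ⟨q, hq1, hq2⟩ := exists_rat_btwn h
    have hq0 : 0 < q := by
      have : (0 : ℝ) < (q : ℝ) := ha.trans hq1
      exact_mod_cast this
    have hmono := gf_mono hN hg h₀ ha hq1
    rw [gf_rat hN h₀ h₁ h₂ hg hq0] at hmono
    linarith

end Triple

lemma exists_triple : ∃ i j k : N, i ≠ j ∧ i ≠ k ∧ j ≠ k := by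
  have h1 : 1 < Fintype.card N := by omega
  obtain ⟨i, j, hij⟩ := Fintype.exists_pair_of_one_lt_card h1
  have h2 : ((univ : Finset N) \ {i, j}).Nonempty := by
    rw [← Finset.card_pos, Finset.card_sdiff_of_subset (Finset.subset_univ _), Finset.card_univ,
      Finset.card_pair hij]
    omega
  obtain ⟨k, hk⟩ := h2
  simp only [Finset.mem_sdiff, Finset.mem_insert, Finset.mem_singleton] at hk
  push_neg at hk
  exact ⟨i, j, k, hij, fun h => hk.2.1 h.symm, fun h => hk.2.2 h.symm⟩

lemma Pmain (hg : Nice c) {x : N → ℝ} (hx : Feasible x) (i : N) :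
    c.P x i * ∑ j, x j = x i := by
  obtain ⟨i₀, j₀, k₀, h₀, h₁, h₂⟩ := exists_triple hN
  have key : ∀ i j : N, c.P x i * x j = c.P x j * x i := by
    intro i j
    rcases eq_or_ne i j with rfl | hij
    · rfl
    rcases eq_or_lt_of_le (hx.1 i) with hi0 | hipos
    · rw [Z hN hg hx hi0.symm, zero_mul, ← hi0, mul_zero]
    rcases eq_or_lt_of_le (hx.1 j) with hj0 | hjpos
    · rw [Z hN hg hx hj0.symm, zero_mul, ← hj0, mul_zero]
    have h := gratio hN h₀ h₁ h₂ hg hx hij hipos hjpos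
    rwa [gf_id hN h₀ h₁ h₂ hg hjpos, gf_id hN h₀ h₁ h₂ hg hipos] at h
  calc c.P x i * ∑ j, x j = ∑ j, c.P x i * x j := Finset.mul_sum _ _ _
    _ = ∑ j, c.P x j * x i := Finset.sum_congr rfl (fun j _ => key i j)
    _ = (∑ j, c.P x j) * x i := (Finset.sum_mul _ _ _).symm
    _ = x i := by rw [sum_P (c := c) hN hx, one_mul]

omit hN in
lemma sum_pos_on {M : Finset N} {x : N → ℝ} (h : FeasibleOn M x) : 0 < ∑ j ∈ M, x j := by
  obtain ⟨hnn, k, hkM, hk⟩ := h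
  exact lt_of_lt_of_le ((hnn k).lt_of_ne' hk) (Finset.single_le_sum (fun j _ => hnn j) hkM)

omit hN in
lemma sum_pos_feas {x : N → ℝ} (h : Feasible x) : 0 < ∑ j, x j :=
  sum_pos_on (feasibleOn_univ h)

lemma P_eq (hg : Nice c) {x : N → ℝ} (hx : Feasible x) (i : N) :
    c.P x i = x i / ∑ j, x j := by
  rw [eq_div_iff (sum_pos_feas hx).ne']
  exact Pmain hN hg hx i

lemma forward (hg : Nice c) (M : Finset N) (hM : 2 ≤ M.card) (x : N → ℝ)
    (hxM : FeasibleOn M x) (i : N) (hiM : i ∈ M) :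
    c.p M x i = x i / ∑ j ∈ M, x j := by
  have hx : Feasible x := feasible_of_on hxM
  obtain ⟨hnn, k, hkM, hk0⟩ := hxM
  have hS : 0 < ∑ j, x j := sum_pos_feas hx
  have hSM : 0 < ∑ j ∈ M, x j := sum_pos_on ⟨hnn, k, hkM, hk0⟩
  have hlca := hg.lca x hx M hM ⟨k, hkM, hk0⟩ i hiM
  have hsumM : ∑ j ∈ M, c.P x j = (∑ j ∈ M, x j) / ∑ j, x j := by
    rw [Finset.sum_div]
    exact Finset.sum_congr rfl (fun j _ => P_eq hN hg hx j)
  rw [P_eq hN hg hx i, hsumM] at hlca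
  rw [eq_div_iff hSM.ne']
  field_simp at hlca
  linarith [hlca]


section Backward

variable (hR : ∀ M : Finset N, 2 ≤ M.card → ∀ x, FeasibleOn M x → ∀ i ∈ M,
  c.p M x i = x i / ∑ j ∈ M, x j)

include hR

lemma bP (x : N → ℝ) (hx : Feasible x) (i : N) : c.P x i = x i / ∑ j, x j :=
  hR univ (card_univ2 hN) x (feasibleOn_univ hx) i (mem_univ i)

lemma bSM : c.SM := by
  intro x hx i hPi xi' hlt
  have hS : 0 < ∑ j, x j := sum_pos_feas hx
  have hxi' : 0 < xi' := lt_of_le_of_lt (hx.1 i) hlt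
  have hfeas' : Feasible (Function.update x i xi') := by
    refine ⟨fun m => ?_, ⟨i, by rw [Function.update_self]; exact hxi'.ne'⟩⟩
    rw [Function.update_apply]; split
    · exact hxi'.le
    · exact hx.1 m
  have hsum' : ∑ j, Function.update x i xi' j = xi' + ∑ j ∈ univ.erase i, x j := by
    rw [Finset.sum_update_of_mem (mem_univ i), Finset.sdiff_singleton_eq_erase]
  have hsplit : ∑ j, x j = x i + ∑ j ∈ univ.erase i, x j :=
    (Finset.add_sum_erase _ x (mem_univ i)).symm
  rw [bP hN hR x hx i] at hPi ⊢
  rw [bP hN hR _ hfeas' i, Function.update_self, hsum']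
  have hxiS : x i < ∑ j, x j := by
    by_contra hcon
    push_neg at hcon
    have : 1 ≤ x i / ∑ j, x j := (one_le_div hS).mpr hcon
    linarith
  have hrest : 0 ≤ ∑ j ∈ univ.erase i, x j :=
    Finset.sum_nonneg (fun j _ => hx.1 j)
  have hS' : 0 < xi' + ∑ j ∈ univ.erase i, x j := by positivity
  rw [div_lt_div_iff₀ hS hS']
  nlinarith [hsplit, hxiS, hlt]

lemma bLCA : c.LCA := by
  intro x hx M hM hwit i hiM
  have hS : 0 < ∑ j, x j := sum_pos_feas hx
  obtain ⟨k, hkM, hk⟩ := hwit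
  have hSM : 0 < ∑ j ∈ M, x j := sum_pos_on ⟨hx.1, k, hkM, hk⟩
  rw [bP hN hR x hx i, hR M hM x ⟨hx.1, k, hkM, hk⟩ i hiM]
  have hsumM : ∑ j ∈ M, c.P x j = (∑ j ∈ M, x j) / ∑ j, x j := by
    rw [Finset.sum_div]
    exact Finset.sum_congr rfl (fun j _ => bP hN hR x hx j)
  rw [hsumM]
  field_simp

lemma bANY : c.ANY := by
  intro π x hx i
  have hxf : Feasible (fun k => x (π.symm k)) := by
    obtain ⟨hnn, k, hk⟩ := hx
    exact ⟨fun m => hnn _, ⟨π k, by simpa using hk⟩⟩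
  rw [bP hN hR _ hxf (π i), bP hN hR x hx i, Equiv.symm_apply_apply]
  congr 1
  exact Equiv.sum_comp π.symm x

lemma bmerge (x : N → ℝ) (hx : Feasible x) (i j : N) (hij : i ≠ j) :
    c.p (univ.erase j) (Function.update x i (x i + x j)) i = c.P x i + c.P x j := by
  have hS : 0 < ∑ m, x m := sum_pos_feas hx
  set y := Function.update x i (x i + x j) with hy
  have hynn : ∀ m, 0 ≤ y m := fun m => by
    rw [hy, Function.update_apply]; split
    · exact add_nonneg (hx.1 i) (hx.1 j)
    · exact hx.1 m
  have hiM : i ∈ univ.erase j := Finset.mem_erase.mpr ⟨hij, mem_univ i⟩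
  have hfeasM : FeasibleOn (univ.erase j) y := by
    refine ⟨hynn, ?_⟩
    obtain ⟨k, hk⟩ := hx.2
    rcases eq_or_ne k i with hki | hki
    · refine ⟨i, hiM, ?_⟩
      rw [hy, Function.update_self]
      have h1 := hx.1 j
      have h2 := (hx.1 i).lt_of_ne' (hki ▸ hk)
      exact ne_of_gt (by linarith)
    rcases eq_or_ne k j with hkj | hkj
    · refine ⟨i, hiM, ?_⟩
      rw [hy, Function.update_self]
      have h1 := hx.1 i
      have h2 := (hx.1 j).lt_of_ne' (hkj ▸ hk)
      exact ne_of_gt (by linarith)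
    · exact ⟨k, Finset.mem_erase.mpr ⟨hkj, mem_univ k⟩,
        by rw [hy, Function.update_of_ne hki]; exact hk⟩
  have hsumy : ∑ m ∈ univ.erase j, y m = ∑ m, x m := by
    have e1 : ∑ m ∈ univ.erase j, y m = y i + ∑ m ∈ (univ.erase j).erase i, y m :=
      (Finset.add_sum_erase _ y hiM).symm
    have e2 : ∑ m ∈ (univ.erase j).erase i, y m = ∑ m ∈ (univ.erase j).erase i, x m :=
      Finset.sum_congr rfl (fun m hm => by
        rw [hy, Function.update_of_ne (Finset.mem_erase.mp hm).1])
    have e3 : ∑ m, x m = x j + ∑ m ∈ univ.erase j, x m :=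
      (Finset.add_sum_erase _ x (mem_univ j)).symm
    have e4 : ∑ m ∈ univ.erase j, x m = x i + ∑ m ∈ (univ.erase j).erase i, x m :=
      (Finset.add_sum_erase _ x hiM).symm
    rw [e1, e2, e3, e4, hy, Function.update_self]
    ring
  rw [hR _ (card_erase2 hN j) y hfeasM i hiM, hsumy, bP hN hR x hx i, bP hN hR x hx j,
    hy, Function.update_self, add_div]

lemma bSP : c.SP := fun x hx i j hij => le_of_eq (bmerge hN hR x hx i j hij).symm

lemma bCP : c.CP := fun x hx i j hij => le_of_eq (bmerge hN hR x hx i j hij)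

end Backward

end S18


/-- SM, LCA, ANY, SP and CP hold iff the CSF is the ratio CSF
`p_i^M(x) = x_i / ∑_{j∈M} x_j`. -/
theorem statement18 {N : Type*} [Fintype N] [DecidableEq N]
    (hN : 3 ≤ Fintype.card N) (c : CSF N) :
    (c.SM ∧ c.LCA ∧ c.ANY ∧ c.SP ∧ c.CP) ↔
      (∀ M : Finset N, 2 ≤ M.card → ∀ x, FeasibleOn M x → ∀ i ∈ M,
        c.p M x i = x i / ∑ j ∈ M, x j) := by
  constructor
  · rintro ⟨hsm, hlca, hany, hsp, hcp⟩
    exact S18.forward hN ⟨hsm, hlca, hany, hsp, hcp⟩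
  · intro hR
    exact ⟨S18.bSM hN hR, S18.bLCA hN hR, S18.bANY hN hR, S18.bSP hN hR, S18.bCP hN hR⟩
end

section
/- Let f_j : ℝ_+ → ℝ_+ (j ∈ N) be strictly increasing nonnegative functions and let p_i^N(x) = f_i(x_i) / Σ_{j∈N} f_j(x_j) for every x ∈ ℝ_+^N \ {0} be the associated logit CSF on the full contestant set. Then: (i) for all x ∈ ℝ_+^N \ {0} and i ≠ j with f_j(x_j) > 0, the deviation satisfies d_{ij}(x) = [p_j^N(0, x_{-i}) − p_j^N(x)] / p_j^N(0, x_{-i}) = (f_i(x_i) − f_i(0)) / Σ_{k∈N} f_k(x_k); and (ii) the CSF satisfies homogeneous relative externality (HRE) if and only if (f_i(x_i) − f_i(0)) / (f_j(x_j) − f_j(0)) = (f_i(λ x_i) − f_i(0)) / (f_j(λ x_j) − f_j(0)) for all i, j ∈ N, all x_i, x_j > 0, and all λ > 0. -/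
open Finset

/-- for the full-contest logit CSF with impact functions `f_j`,
(i) the deviation equals `(f_i(x_i) − f_i(0)) / ∑_k f_k(x_k)`, and
(ii) HRE holds iff the increments `f_i(·) − f_i(0)` are relatively homogeneous. -/
theorem statement19 {N : Type*} [Fintype N] [DecidableEq N]
    (hN : 3 ≤ Fintype.card N)
    (f : N → ℝ → ℝ)
    (hmono : ∀ j, StrictMonoOn (f j) (Set.Ici 0))
    (hnn : ∀ j, ∀ t : ℝ, 0 ≤ t → 0 ≤ f j t)
    (P : (N → ℝ) → N → ℝ)
    (hP : ∀ x i, P x i = f i (x i) / ∑ j, f j (x j))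
    (dev : (N → ℝ) → N → N → ℝ)
    (hdev : ∀ x i j, dev x i j =
      (P (Function.update x i 0) j - P x j) / P (Function.update x i 0) j) :
    (∀ x, Feasible x → ∀ i j : N, i ≠ j → 0 < f j (x j) →
        dev x i j = (f i (x i) - f i 0) / ∑ k, f k (x k)) ∧
    ((∀ x, Feasible x → ∀ i j : N, i ≠ j → 0 < x i → 0 < x j → ∀ l : ℝ, 0 < l →
        0 < P (Function.update x i 0) j → 0 < P (Function.update x j 0) i →
        0 < P (Function.update (fun k => l * x k) i 0) j →
        0 < P (Function.update (fun k => l * x k) j 0) i →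
        dev x j i ≠ 0 → dev (fun k => l * x k) j i ≠ 0 →
        dev x i j / dev x j i
          = dev (fun k => l * x k) i j / dev (fun k => l * x k) j i) ↔
      (∀ i j : N, ∀ xi xj : ℝ, 0 < xi → 0 < xj → ∀ l : ℝ, 0 < l →
        (f i xi - f i 0) / (f j xj - f j 0)
          = (f i (l * xi) - f i 0) / (f j (l * xj) - f j 0))) := by
  classical
  have fpos : ∀ i t, 0 < t → 0 < f i t := fun i t ht =>
    lt_of_le_of_lt (hnn i 0 le_rfl)
      (hmono i (Set.mem_Ici.2 le_rfl) (Set.mem_Ici.2 ht.le) ht)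
  have rpos : ∀ i t, 0 < t → 0 < f i t - f i 0 := fun i t ht => by
    have := hmono i (Set.mem_Ici.2 le_rfl) (Set.mem_Ici.2 ht.le) ht
    linarith
  have Spos : ∀ x : N → ℝ, (∀ k, 0 ≤ x k) → ∀ j, 0 < f j (x j) →
      0 < ∑ k, f k (x k) := by
    intro x hx j hj
    exact lt_of_lt_of_le hj
      (Finset.single_le_sum (fun k _ => hnn k (x k) (hx k)) (Finset.mem_univ j))
  have hupd : ∀ (x : N → ℝ) (i : N),
      (fun k => f k (Function.update x i 0 k))
        = Function.update (fun k => f k (x k)) i (f i 0) := by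
    intro x i; funext k
    by_cases h : k = i
    · subst h; simp
    · simp [Function.update_of_ne h]
  have Ssub : ∀ (x : N → ℝ) (i : N),
      ∑ k, f k (Function.update x i 0 k) = (∑ k, f k (x k)) - f i (x i) + f i 0 := by
    intro x i
    have h1 : ∑ k, f k (Function.update x i 0 k)
        = ∑ k, Function.update (fun k => f k (x k)) i (f i 0) k := by
      rw [hupd]
    rw [h1, Finset.sum_update_of_mem (Finset.mem_univ i)]
    have h2 := Finset.sum_eq_sum_sdiff_singleton_add (Finset.mem_univ i)
      (fun k => f k (x k))
    rw [h2]; ring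
  have upd_nonneg : ∀ (x : N → ℝ), (∀ k, 0 ≤ x k) → ∀ i k,
      0 ≤ Function.update x i 0 k := by
    intro x hx i k
    by_cases h : k = i
    · subst h; simp
    · simp [Function.update_of_ne h, hx k]
  have part1 : ∀ x, Feasible x → ∀ i j : N, i ≠ j → 0 < f j (x j) →
      dev x i j = (f i (x i) - f i 0) / ∑ k, f k (x k) := by
    intro x hx i j hij hj
    have hT : 0 < ∑ k, f k (x k) := Spos x hx.1 j hj
    have huj : Function.update x i 0 j = x j := Function.update_of_ne (Ne.symm hij) _ _
    have hT' : 0 < ∑ k, f k (Function.update x i 0 k) := by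
      refine Spos _ (upd_nonneg x hx.1 i) j ?_
      rw [huj]; exact hj
    rw [Ssub] at hT'
    rw [hdev, hP, hP, huj, Ssub]
    field_simp
    ring
  have Ppos : ∀ x : N → ℝ, (∀ k, 0 ≤ x k) → ∀ i j : N, i ≠ j → 0 < f j (x j) →
      0 < P (Function.update x i 0) j := by
    intro x hx i j hij hj
    have huj : Function.update x i 0 j = x j := Function.update_of_ne (Ne.symm hij) _ _
    have hT' : 0 < ∑ k, f k (Function.update x i 0 k) := by
      refine Spos _ (upd_nonneg x hx i) j ?_
      rw [huj]; exact hj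
    rw [hP, huj]
    exact div_pos hj hT'
  have ratio : ∀ x, Feasible x → ∀ i j : N, i ≠ j → 0 < x i → 0 < x j →
      dev x i j / dev x j i = (f i (x i) - f i 0) / (f j (x j) - f j 0) := by
    intro x hx i j hij hxi hxj
    rw [part1 x hx i j hij (fpos j _ hxj), part1 x hx j i hij.symm (fpos i _ hxi)]
    have hT : (∑ k, f k (x k)) ≠ 0 := (Spos x hx.1 j (fpos j _ hxj)).ne'
    have hb : f j (x j) - f j 0 ≠ 0 := (rpos j _ hxj).ne'
    field_simp
  have devpos : ∀ x, Feasible x → ∀ i j : N, i ≠ j → 0 < x i → 0 < x j →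
      0 < dev x i j := by
    intro x hx i j hij hxi hxj
    rw [part1 x hx i j hij (fpos j _ hxj)]
    exact div_pos (rpos i _ hxi) (Spos x hx.1 j (fpos j _ hxj))
  refine ⟨part1, ?_, ?_⟩
  · intro h i j xi xj hxi hxj l hl
    have key : ∀ i j : N, i ≠ j → ∀ xi xj : ℝ, 0 < xi → 0 < xj →
        (f i xi - f i 0) / (f j xj - f j 0)
          = (f i (l * xi) - f i 0) / (f j (l * xj) - f j 0) := by
      intro i j hij xi xj hxi hxj
      set x : N → ℝ := fun k => if k = i then xi else if k = j then xj else 0 with hxdef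
      have hxi' : x i = xi := by simp [hxdef]
      have hxj' : x j = xj := by simp [hxdef, if_neg (Ne.symm hij)]
      have hxnn : ∀ k, 0 ≤ x k := by
        intro k; simp only [hxdef]
        split_ifs <;> [exact hxi.le; exact hxj.le; exact le_rfl]
      have hx : Feasible x := ⟨hxnn, ⟨i, by rw [hxi']; exact hxi.ne'⟩⟩
      have hxif : 0 < x i := by rw [hxi']; exact hxi
      have hxjf : 0 < x j := by rw [hxj']; exact hxj
      have hlnn : ∀ k, 0 ≤ l * x k := fun k => mul_nonneg hl.le (hxnn k)
      have hlx : Feasible (fun k => l * x k) := ⟨hlnn, ⟨i, (mul_pos hl hxif).ne'⟩⟩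
      have hmain := h x hx i j hij hxif hxjf l hl
        (Ppos x hxnn i j hij (fpos j _ hxjf))
        (Ppos x hxnn j i hij.symm (fpos i _ hxif))
        (Ppos _ hlnn i j hij (fpos j _ (mul_pos hl hxjf)))
        (Ppos _ hlnn j i hij.symm (fpos i _ (mul_pos hl hxif)))
        (devpos x hx j i hij.symm hxjf hxif).ne'
        (devpos _ hlx j i hij.symm (mul_pos hl hxjf) (mul_pos hl hxif)).ne'
      rw [ratio x hx i j hij hxif hxjf,
        ratio _ hlx i j hij (mul_pos hl hxif) (mul_pos hl hxjf)] at hmain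
      rw [hxi', hxj'] at hmain
      exact hmain
    by_cases hij : i = j
    · subst hij
      obtain ⟨k, hk⟩ := Fintype.exists_ne_of_one_lt_card (by omega) i
      have h1 := (key i k (Ne.symm hk) xi 1 hxi one_pos)
      have h2 := (key i k (Ne.symm hk) xj 1 hxj one_pos)
      have ha : 0 < f i xi - f i 0 := rpos i _ hxi
      have hb : 0 < f i xj - f i 0 := rpos i _ hxj
      have ha' : 0 < f i (l * xi) - f i 0 := rpos i _ (mul_pos hl hxi)
      have hb' : 0 < f i (l * xj) - f i 0 := rpos i _ (mul_pos hl hxj)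
      have hc : 0 < f k 1 - f k 0 := rpos k 1 one_pos
      have hc' : 0 < f k (l * 1) - f k 0 := rpos k _ (mul_pos hl one_pos)
      rw [div_eq_div_iff hc.ne' hc'.ne'] at h1 h2
      rw [div_eq_div_iff hb.ne' hb'.ne']
      have hcc : (f k 1 - f k 0) * (f k (l * 1) - f k 0) ≠ 0 :=
        (mul_pos hc hc').ne'
      apply mul_right_cancel₀ hcc
      linear_combination (f i (l * xj) - f i 0) * (f k 1 - f k 0) * h1
        - (f i (l * xi) - f i 0) * (f k 1 - f k 0) * h2
    · exact key i j hij xi xj hxi hxj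
  · intro h x hx i j hij hxi hxj l hl _ _ _ _ _ _
    have hlx : Feasible (fun k => l * x k) :=
      ⟨fun k => mul_nonneg hl.le (hx.1 k), ⟨i, (mul_pos hl hxi).ne'⟩⟩
    rw [ratio x hx i j hij hxi hxj,
      ratio _ hlx i j hij (mul_pos hl hxi) (mul_pos hl hxj)]
    exact h i j (x i) (x j) hxi hxj l hl
end
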